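/- arXiv:alg-geom/9502012 — 8 statements merged into one kernel-verified Lean document; each statement's English description precedes it below -/
import Mathlib

section
/- The set E_8 of exceptional classes is finite; that is, there are only finitely many pairs (d, m) ∈ ℤ × (Fin 8 → ℤ) satisfying d² − ∑_{i} m_i² = −1 and 3d − ∑_{i} m_i = 1. -/
/-!
Cauchy–Schwarz gives `(3d - 1)² = (∑ mᵢ)² ≤ 8 ∑ mᵢ² = 8 (d² + 1)`, i.e. `(d + 1)(d - 7) ≤ 0`,
so `-1 ≤ d ≤ 7`. Then every `mᵢ² ≤ ∑ mⱼ² = d² + 1 ≤ 50`, so all coordinates lie in a fixed box.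
-/

/-- The exceptional classes in the lattice `ℤ × (Fin 8 → ℤ)` modelling the
Picard group of the Del Pezzo surface `S₈`: classes `ξ = (d, m)` with
`ξ·ξ = -1` and `ξ·K = -1`, i.e. `d² - ∑ mᵢ² = -1` and `3d - ∑ mᵢ = 1`. -/
def E8 : Set (ℤ × (Fin 8 → ℤ)) :=
  {p | p.1 ^ 2 - ∑ i, (p.2 i) ^ 2 = -1 ∧ 3 * p.1 - ∑ i, p.2 i = 1}

section Exceptional

variable {ι : Type*} [Fintype ι]

theorem exceptional_degree_mem_Icc (hι : Fintype.card ι ≤ 8) {d : ℤ} {m : ι → ℤ}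
    (hsq : ∑ i, m i ^ 2 = d ^ 2 + 1) (hsum : ∑ i, m i = 3 * d - 1) :
    d ∈ Set.Icc (-1 : ℤ) 7 := by
  have hcs : (3 * d - 1) ^ 2 ≤ 8 * (d ^ 2 + 1) :=
    calc (3 * d - 1) ^ 2 = (∑ i, m i) ^ 2 := by rw [hsum]
      _ ≤ Fintype.card ι * ∑ i, m i ^ 2 := by
        simpa using sq_sum_le_card_mul_sum_sq (s := Finset.univ) (f := m)
      _ ≤ 8 * (d ^ 2 + 1) := by
        rw [hsq]; gcongr; exact_mod_cast hι
  constructor <;> nlinarith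

theorem abs_le_of_sum_sq_le {m : ι → ℤ} {b : ℤ} (hb : 0 ≤ b) (h : ∑ i, m i ^ 2 ≤ b ^ 2)
    (i : ι) : m i ∈ Set.Icc (-b) b :=
  abs_le_of_sq_le_sq' ((Finset.single_le_sum (fun j _ => sq_nonneg (m j))
    (Finset.mem_univ i)).trans h) hb

theorem finite_setOf_exceptional (hι : Fintype.card ι ≤ 8) :
    {p : ℤ × (ι → ℤ) | p.1 ^ 2 - ∑ i, p.2 i ^ 2 = -1 ∧ 3 * p.1 - ∑ i, p.2 i = 1}.Finite := by
  refine ((Set.finite_Icc (-1 : ℤ) 7).prod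
    (Set.Finite.pi fun _ : ι => Set.finite_Icc (-8 : ℤ) 8)).subset ?_
  rintro ⟨d, m⟩ ⟨hsq, hsum⟩
  dsimp only at hsq hsum
  have hd := exceptional_degree_mem_Icc hι (d := d) (m := m) (by linarith) (by linarith)
  have hm : ∑ i, m i ^ 2 ≤ 8 ^ 2 := by nlinarith [hd.1, hd.2]
  exact ⟨hd, fun i _ => abs_le_of_sum_sq_le (by norm_num) hm i⟩

end Exceptional

/-- the set of exceptional classes `E₈` is finite. -/
theorem E8_finite : E8.Finite :=
  finite_setOf_exceptional (by simp)
end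

section
/- A pair (d, m) ∈ ℤ × (Fin 8 → ℤ) is an exceptional class (d² − ∑ m_i² = −1 and 3d − ∑ m_i = 1) if and only if 0 ≤ d ≤ 6 and the multiset of values {m_1, …, m_8} is, according to d: for d = 0, one entry −1 and seven entries 0; for d = 1, two entries 1 and six entries 0; for d = 2, five entries 1 and three entries 0; for d = 3, one entry 2, six entries 1 and one entry 0; for d = 4, three entries 2 and five entries 1; for d = 5, six entries 2 and two entries 1; for d = 6, one entry 3 and seven entries 2. Moreover the numbers of exceptional classes of these seven types are respectively 8, 28, 56, 56, 56, 28 and 8. -/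
set_option maxRecDepth 100000
set_option maxHeartbeats 4000000

/-- The multiset of values of `m : Fin 8 → ℤ`. -/
def mset8 (m : Fin 8 → ℤ) : Multiset ℤ := Finset.univ.val.map m

/-- A class `(d, m)` in `Λ₈ = ℤ × (Fin 8 → ℤ)` is exceptional if
`d² - ∑ mᵢ² = -1` and `3d - ∑ mᵢ = 1`. -/
def IsExc8 (p : ℤ × (Fin 8 → ℤ)) : Prop :=
  p.1 ^ 2 - ∑ i, (p.2 i) ^ 2 = -1 ∧ 3 * p.1 - ∑ i, p.2 i = 1

/-- The seven types `(d, multiset of mᵢ)` of exceptional classes on `S₈`. -/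
def excTypes8 : List (ℤ × Multiset ℤ) :=
  [ (0, (-1) ::ₘ Multiset.replicate 7 0),
    (1, Multiset.replicate 2 1 + Multiset.replicate 6 0),
    (2, Multiset.replicate 5 1 + Multiset.replicate 3 0),
    (3, 2 ::ₘ (Multiset.replicate 6 1 + {0})),
    (4, Multiset.replicate 3 2 + Multiset.replicate 5 1),
    (5, Multiset.replicate 6 2 + Multiset.replicate 2 1),
    (6, 3 ::ₘ Multiset.replicate 7 2) ]

lemma mset8_sum (m : Fin 8 → ℤ) : (mset8 m).sum = ∑ i, m i := rfl

lemma mset8_sumsq (m : Fin 8 → ℤ) :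
    ((mset8 m).map (fun x => x ^ 2)).sum = ∑ i, (m i) ^ 2 := by
  rw [mset8, Multiset.map_map]; rfl

lemma mset8_card (m : Fin 8 → ℤ) : Multiset.card (mset8 m) = 8 := by simp [mset8]

lemma isExc8_iff (d : ℤ) (m : Fin 8 → ℤ) :
    IsExc8 (d, m) ↔ (d ^ 2 - ∑ i, (m i) ^ 2 = -1 ∧ 3 * d - ∑ i, m i = 1) := Iff.rfl

lemma consec_nonneg (x a : ℤ) : 0 ≤ (x - a) * (x - (a + 1)) := by
  rcases le_or_gt x a with h | h <;> nlinarith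

lemma sum_shift (m : Fin 8 → ℤ) (a : ℤ) :
    ∑ i, (m i - a) * (m i - (a + 1)) =
      (∑ i, (m i) ^ 2) - (2 * a + 1) * (∑ i, m i) + 8 * (a * (a + 1)) := by
  simp only [Fin.sum_univ_eight]; ring

lemma two_val (M : Multiset ℤ) (a b : ℤ) (hab : a ≠ b)
    (h : ∀ x ∈ M, x = a ∨ x = b) :
    M = Multiset.replicate (M.count a) a + Multiset.replicate (M.count b) b := by
  have h0 := Multiset.filter_add_not (· = a) M
  have h2 : M.filter (fun x => ¬ x = a) = M.filter (· = b) := by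
    apply Multiset.filter_congr
    intro x hx
    rcases h x hx with h | h <;> subst h <;> simp [hab, Ne.symm hab]
  rw [h2, Multiset.filter_eq', Multiset.filter_eq'] at h0
  exact h0.symm

lemma four_val (M : Multiset ℤ) (a b c d : ℤ) (hab : a ≠ b) (hac : a ≠ c)
    (had : a ≠ d) (hbc : b ≠ c) (hbd : b ≠ d) (hcd : c ≠ d)
    (h : ∀ x ∈ M, x = a ∨ x = b ∨ x = c ∨ x = d) :
    M = Multiset.replicate (M.count a) a + Multiset.replicate (M.count b) b
      + Multiset.replicate (M.count c) c + Multiset.replicate (M.count d) d := by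
  have h0 := Multiset.filter_add_not (· = a) M
  set R := M.filter (fun x => ¬ x = a) with hR
  have h1 := Multiset.filter_add_not (· = b) R
  set R2 := R.filter (fun x => ¬ x = b) with hR2
  have h2 : R2 = Multiset.replicate (R2.count c) c + Multiset.replicate (R2.count d) d := by
    apply two_val _ _ _ hcd
    intro x hx
    rw [hR2, Multiset.mem_filter] at hx
    obtain ⟨hx, hxb⟩ := hx
    rw [hR, Multiset.mem_filter] at hx
    obtain ⟨hx, hxa⟩ := hx
    rcases h x hx with h | h | h | h <;> simp_all
  have hcb : R2.count c = M.count c := by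
    simp [hR2, hR, Multiset.count_filter, Ne.symm hbc, Ne.symm hac]
  have hdb : R2.count d = M.count d := by
    simp [hR2, hR, Multiset.count_filter, Ne.symm hbd, Ne.symm had]
  have hbR : R.count b = M.count b := by
    simp [hR, Multiset.count_filter, Ne.symm hab]
  rw [Multiset.filter_eq'] at h0 h1
  rw [hcb, hdb] at h2
  rw [h2, hbR] at h1
  rw [← h1] at h0
  exact h0.symm.trans (by abel)

lemma two_case (m : Fin 8 → ℤ) (a : ℤ) (k l : ℕ) (hcard : k + l = 8)
    (hS : ∑ i, m i = a * k + (a + 1) * l)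
    (hT : ∑ i, (m i - a) * (m i - (a + 1)) = 0) :
    mset8 m = Multiset.replicate k a + Multiset.replicate l (a + 1) := by
  have hz := (Finset.sum_eq_zero_iff_of_nonneg
    (fun i _ => consec_nonneg (m i) a)).mp hT
  have hvals : ∀ x ∈ mset8 m, x = a ∨ x = a + 1 := by
    intro x hx
    obtain ⟨i, _, rfl⟩ := Multiset.mem_map.mp hx
    have h := hz i (Finset.mem_univ i)
    rcases mul_eq_zero.mp h with h | h
    · left; linarith
    · right; linarith
  have hM := two_val (mset8 m) a (a + 1) (by omega) hvals
  have hc2 := congrArg Multiset.card hM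
  rw [mset8_card] at hc2
  simp only [Multiset.card_add, Multiset.card_replicate] at hc2
  have hs2 := congrArg Multiset.sum hM
  rw [mset8_sum, hS] at hs2
  simp only [Multiset.sum_add, Multiset.sum_replicate, nsmul_eq_mul] at hs2
  have hcard' : ((mset8 m).count a : ℤ) + (mset8 m).count (a + 1) = (k : ℤ) + l := by
    push_cast; omega
  have hl : ((mset8 m).count (a + 1) : ℤ) = (l : ℤ) := by linear_combination -hs2 - a * hcard'
  have hk : (mset8 m).count a = k := by omega
  have hl' : (mset8 m).count (a + 1) = l := by omega
  rw [hk, hl'] at hM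
  exact hM

lemma set_eq_finset (dv : ℤ) (M : Multiset ℤ) (V : Finset ℤ) (hV : ∀ x ∈ M, x ∈ V) :
    {p : ℤ × (Fin 8 → ℤ) | p.1 = dv ∧ mset8 p.2 = M} =
    ↑(((Fintype.piFinset (fun _ : Fin 8 => V)).filter
        (fun m => mset8 m = M)).image (fun m => (dv, m))) := by
  ext ⟨a, m⟩
  simp only [Set.mem_setOf_eq, Finset.coe_image, Set.mem_image, Finset.mem_coe,
    Finset.mem_filter, Fintype.mem_piFinset, Prod.mk.injEq]
  constructor
  · rintro ⟨rfl, hm⟩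
    exact ⟨m, ⟨fun i => hV _ (hm ▸ Multiset.mem_map_of_mem m (Finset.mem_univ_val i)), hm⟩,
      rfl, rfl⟩
  · rintro ⟨m', ⟨_, hm⟩, h1, h2⟩
    subst h1
    exact ⟨rfl, h2 ▸ hm⟩

lemma ncard_type (dv : ℤ) (M : Multiset ℤ) (V : Finset ℤ) (hV : ∀ x ∈ M, x ∈ V) (n : ℕ)
    (hcount : ((Fintype.piFinset (fun _ : Fin 8 => V)).filter
        (fun m => mset8 m = M)).card = n) :
    {p : ℤ × (Fin 8 → ℤ) | p.1 = dv ∧ mset8 p.2 = M}.ncard = n := by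
  rw [set_eq_finset dv M V hV, Set.ncard_coe_finset,
    Finset.card_image_of_injective _ (fun x y h => congrArg Prod.snd h), hcount]

/-- `(d, m) ∈ ℤ × (Fin 8 → ℤ)` is exceptional iff `0 ≤ d ≤ 6` and
the multiset `{m₁, …, m₈}` is the one prescribed by `d` in the table
`excTypes8`; moreover the numbers of exceptional classes of the seven types are
respectively `8, 28, 56, 56, 56, 28, 8`. -/
theorem exceptional_classes_S8 :
    (∀ d : ℤ, ∀ m : Fin 8 → ℤ,
      IsExc8 (d, m) ↔ (0 ≤ d ∧ d ≤ 6 ∧ (d, mset8 m) ∈ excTypes8)) ∧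
    (List.map
      (fun t => {p : ℤ × (Fin 8 → ℤ) | p.1 = t.1 ∧ mset8 p.2 = t.2}.ncard)
      excTypes8 = [8, 28, 56, 56, 56, 28, 8]) := by
  constructor
  · intro d m
    constructor
    · intro h
      obtain ⟨h1, h2⟩ := (isExc8_iff d m).mp h
      have hS : ∑ i, m i = 3 * d - 1 := by linarith
      have hQ : ∑ i, (m i) ^ 2 = d ^ 2 + 1 := by linarith
      have id28 : 8 * (∑ i, (m i) ^ 2) - (∑ i, m i) ^ 2 = (m 0 - m 1)^2 + (m 0 - m 2)^2 + (m 0 - m 3)^2 + (m 0 - m 4)^2 + (m 0 - m 5)^2 + (m 0 - m 6)^2 + (m 0 - m 7)^2 + (m 1 - m 2)^2 + (m 1 - m 3)^2 + (m 1 - m 4)^2 + (m 1 - m 5)^2 + (m 1 - m 6)^2 + (m 1 - m 7)^2 + (m 2 - m 3)^2 + (m 2 - m 4)^2 + (m 2 - m 5)^2 + (m 2 - m 6)^2 + (m 2 - m 7)^2 + (m 3 - m 4)^2 + (m 3 - m 5)^2 + (m 3 - m 6)^2 + (m 3 - m 7)^2 + (m 4 - m 5)^2 + (m 4 - m 6)^2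 + (m 4 - m 7)^2 + (m 5 - m 6)^2 + (m 5 - m 7)^2 + (m 6 - m 7)^2 := by
        simp only [Fin.sum_univ_eight]; ring
      rw [hS, hQ] at id28
      have pos28 : (0:ℤ) ≤ (m 0 - m 1)^2 + (m 0 - m 2)^2 + (m 0 - m 3)^2 + (m 0 - m 4)^2 + (m 0 - m 5)^2 + (m 0 - m 6)^2 + (m 0 - m 7)^2 + (m 1 - m 2)^2 + (m 1 - m 3)^2 + (m 1 - m 4)^2 + (m 1 - m 5)^2 + (m 1 - m 6)^2 + (m 1 - m 7)^2 + (m 2 - m 3)^2 + (m 2 - m 4)^2 + (m 2 - m 5)^2 + (m 2 - m 6)^2 + (m 2 - m 7)^2 + (m 3 - m 4)^2 + (m 3 - m 5)^2 + (m 3 - m 6)^2 + (m 3 - m 7)^2 + (m 4 - m 5)^2 + (m 4 - m 6)^2 + (m 4 - m 7)^2 + (m 5 - m 6)^2 + (m 5 - m 7)^2 + (m 6 - m 7)^2 := by positivity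
      have hb1 : -1 ≤ d := by nlinarith [id28, pos28, sq_nonneg (d + 1)]
      have hb2 : d ≤ 7 := by nlinarith [id28, pos28, sq_nonneg (d - 7)]
      clear h h1 h2 id28 pos28
      interval_cases d
      · -- d = -1
        exfalso
        have h0 := Finset.sum_nonneg (fun i (_ : i ∈ Finset.univ) => consec_nonneg (m i) (-1))
        rw [sum_shift] at h0
        norm_num at hS hQ
        linarith
      · -- d = 0
        have hM := two_case m (-1) 1 7 (by norm_num)
          (by rw [hS]; norm_num) (by rw [sum_shift, hS, hQ]; ring)
        refine ⟨by norm_num, by norm_num, ?_⟩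
        rw [hM]; decide
      · -- d = 1
        have hM := two_case m 0 6 2 (by norm_num)
          (by rw [hS]; norm_num) (by rw [sum_shift, hS, hQ]; ring)
        refine ⟨by norm_num, by norm_num, ?_⟩
        rw [hM]; decide
      · -- d = 2
        have hM := two_case m 0 3 5 (by norm_num)
          (by rw [hS]; norm_num) (by rw [sum_shift, hS, hQ]; ring)
        refine ⟨by norm_num, by norm_num, ?_⟩
        rw [hM]; decide
      · -- d = 3
        have hT : ∑ i, (m i - 1) * (m i - (1 + 1)) = 2 := by
          rw [sum_shift, hS, hQ]; ring
        have hub : ∀ i : Fin 8, (m i - 1) * (m i - (1 + 1)) ≤ 2 := by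
          intro i
          have h := Finset.single_le_sum
            (f := fun j => (m j - 1) * (m j - (1 + 1)))
            (fun j _ => consec_nonneg (m j) 1) (Finset.mem_univ i)
          rw [hT] at h
          exact h
        have hvals : ∀ x ∈ mset8 m, x = 0 ∨ x = 1 ∨ x = 2 ∨ x = 3 := by
          intro x hx
          obtain ⟨i, _, rfl⟩ := Multiset.mem_map.mp hx
          have h1 := consec_nonneg (m i) 1
          have h2 := hub i
          have hl : 0 ≤ m i := by nlinarith
          have hu : m i ≤ 3 := by nlinarith
          omega
        have hM := four_val (mset8 m) 0 1 2 3 (by norm_num) (by norm_num) (by norm_num)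
          (by norm_num) (by norm_num) (by norm_num) hvals
        have hc := congrArg Multiset.card hM
        rw [mset8_card] at hc
        simp only [Multiset.card_add, Multiset.card_replicate] at hc
        have hs := congrArg Multiset.sum hM
        rw [mset8_sum, hS] at hs
        simp only [Multiset.sum_add, Multiset.sum_replicate, nsmul_eq_mul] at hs
        have hq := congrArg (fun M : Multiset ℤ => (M.map (fun x => x ^ 2)).sum) hM
        rw [mset8_sumsq, hQ] at hq
        simp only [Multiset.map_add, Multiset.map_replicate, Multiset.sum_add,
          Multiset.sum_replicate, nsmul_eq_mul] at hq
        norm_num at hs hq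
        have hc0 : (mset8 m).count 0 = 1 := by omega
        have hc1 : (mset8 m).count 1 = 6 := by omega
        have hc2 : (mset8 m).count 2 = 1 := by omega
        have hc3 : (mset8 m).count 3 = 0 := by omega
        rw [hc0, hc1, hc2, hc3] at hM
        refine ⟨by norm_num, by norm_num, ?_⟩
        rw [hM]; decide
      · -- d = 4
        have hM := two_case m 1 5 3 (by norm_num)
          (by rw [hS]; norm_num) (by rw [sum_shift, hS, hQ]; ring)
        refine ⟨by norm_num, by norm_num, ?_⟩
        rw [hM]; decide
      · -- d = 5
        have hM := two_case m 1 2 6 (by norm_num)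
          (by rw [hS]; norm_num) (by rw [sum_shift, hS, hQ]; ring)
        refine ⟨by norm_num, by norm_num, ?_⟩
        rw [hM]; decide
      · -- d = 6
        have hM := two_case m 2 7 1 (by norm_num)
          (by rw [hS]; norm_num) (by rw [sum_shift, hS, hQ]; ring)
        refine ⟨by norm_num, by norm_num, ?_⟩
        rw [hM]; decide
      · -- d = 7
        exfalso
        have h0 := Finset.sum_nonneg (fun i (_ : i ∈ Finset.univ) => consec_nonneg (m i) 2)
        rw [sum_shift] at h0
        norm_num at hS hQ
        linarith
    · rintro ⟨hd0, hd6, hmem⟩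
      simp only [excTypes8, List.mem_cons, List.not_mem_nil, or_false, Prod.mk.injEq] at hmem
      rcases hmem with ⟨rfl, hm⟩ | ⟨rfl, hm⟩ | ⟨rfl, hm⟩ | ⟨rfl, hm⟩ | ⟨rfl, hm⟩ |
        ⟨rfl, hm⟩ | ⟨rfl, hm⟩ <;>
      exact (isExc8_iff _ m).mpr
        ⟨by rw [← mset8_sumsq m, hm]; decide, by rw [← mset8_sum m, hm]; decide⟩
  · have e0 := ncard_type 0 ((-1) ::ₘ Multiset.replicate 7 0) ({-1, 0} : Finset ℤ)
      (by decide) 8 (by decide)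
    have e1 := ncard_type 1 (Multiset.replicate 2 1 + Multiset.replicate 6 0)
      ({0, 1} : Finset ℤ) (by decide) 28 (by decide)
    have e2 := ncard_type 2 (Multiset.replicate 5 1 + Multiset.replicate 3 0)
      ({0, 1} : Finset ℤ) (by decide) 56 (by decide)
    have e3 := ncard_type 3 (2 ::ₘ (Multiset.replicate 6 1 + {0}))
      ({0, 1, 2} : Finset ℤ) (by decide) 56 (by decide)
    have e4 := ncard_type 4 (Multiset.replicate 3 2 + Multiset.replicate 5 1)
      ({1, 2} : Finset ℤ) (by decide) 56 (by decide)
    have e5 := ncard_type 5 (Multiset.replicate 6 2 + Multiset.replicate 2 1)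
      ({1, 2} : Finset ℤ) (by decide) 28 (by decide)
    have e6 := ncard_type 6 (3 ::ₘ Multiset.replicate 7 2)
      ({2, 3} : Finset ℤ) (by decide) 8 (by decide)
    simp only [excTypes8, List.map_cons, List.map_nil]
    rw [e0, e1, e2, e3, e4, e5, e6]
end

section
/- A pair (d, m) ∈ ℤ × (Fin 6 → ℤ) is an exceptional class (d² − ∑ m_i² = −1 and 3d − ∑ m_i = 1) if and only if the multiset of values {m_1, …, m_6} together with d is one of: d = 0 with one entry −1 and five entries 0; d = 1 with two entries 1 and four entries 0; d = 2 with five entries 1 and one entry 0. The numbers of exceptional classes of these three types are respectively 6, 15 and 6, giving in total the 27 lines of the cubic surface S_6. -/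
/-- The multiset of values of `m : Fin 6 → ℤ`. -/
def mset6 (m : Fin 6 → ℤ) : Multiset ℤ := Finset.univ.val.map m

/-- A class `(d, m)` in `Λ₆ = ℤ × (Fin 6 → ℤ)` is exceptional if
`d² - ∑ mᵢ² = -1` and `3d - ∑ mᵢ = 1`. -/
def IsExc6 (p : ℤ × (Fin 6 → ℤ)) : Prop :=
  p.1 ^ 2 - ∑ i, (p.2 i) ^ 2 = -1 ∧ 3 * p.1 - ∑ i, p.2 i = 1

/-- The three types `(d, multiset of mᵢ)` of exceptional classes on the cubic
surface `S₆`. -/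
def excTypes6 : List (ℤ × Multiset ℤ) :=
  [ (0, (-1) ::ₘ Multiset.replicate 5 0),
    (1, Multiset.replicate 2 1 + Multiset.replicate 4 0),
    (2, Multiset.replicate 5 1 + Multiset.replicate 1 0) ]

/-! Cauchy–Schwarz applied to `∑ mᵢ = 3d - 1` and `∑ mᵢ² = d² + 1` gives `3d² - 6d - 5 ≤ 0`,
so `d ∈ {0, 1, 2}`. With `ε = -1` for `d = 0` and `ε = 1` otherwise,
`∑ mᵢ (mᵢ - ε) = d² + 1 - ε (3d - 1) = 0`; as no integer lies strictly between `0` and `ε`,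
every summand is nonnegative, hence zero. So `m` takes the value `ε` on a set `s ⊆ Fin 6` and
`0` off it, with `#s = d² + 1`, and the classes of each type correspond to the `#s`-subsets of
`Fin 6`: there are `C(6,1) + C(6,2) + C(6,5) = 6 + 15 + 6` of them. -/

open Finset
open Multiset (replicate)

section TwoValued

variable {ι α : Type*} [Fintype ι] [DecidableEq ι]

theorem map_univ_ite (s : Finset ι) (a b : α) :
    (univ : Finset ι).val.map (fun i => if i ∈ s then a else b) =
      replicate #s a + replicate (Fintype.card ι - #s) b := by
  rw [← Multiset.filter_add_not (· ∈ s) (univ : Finset ι).val, Multiset.map_add]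
  congr 1 <;> rw [Multiset.eq_replicate] <;> constructor
  · simp [← Finset.filter_val]
  · simp +contextual
  · simp [← Finset.filter_val, Finset.filter_not]
  · simp +contextual

theorem exists_eq_ite_of_forall_eq_or_eq [DecidableEq α] {a b : α} {m : ι → α}
    (h : ∀ i, m i = a ∨ m i = b) : ∃ s : Finset ι, m = fun i => if i ∈ s then a else b := by
  refine ⟨univ.filter (m · = a), funext fun i => ?_⟩
  rcases h i with hi | hi <;> simp [hi]

theorem map_univ_eq_replicate_add_replicate_iff [DecidableEq α] {a b : α} (hab : a ≠ b)
    {k l : ℕ} (hkl : k + l = Fintype.card ι) (m : ι → α) :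
    (univ : Finset ι).val.map m = replicate k a + replicate l b ↔
      ∃ s : Finset ι, #s = k ∧ m = fun i => if i ∈ s then a else b := by
  constructor
  · intro hm
    have hval : ∀ i, m i = a ∨ m i = b := fun i => by
      have hi : m i ∈ replicate k a + replicate l b :=
        hm ▸ Multiset.mem_map_of_mem m (mem_univ i)
      rcases Multiset.mem_add.1 hi with hi | hi
      exacts [.inl (Multiset.eq_of_mem_replicate hi), .inr (Multiset.eq_of_mem_replicate hi)]
    obtain ⟨s, rfl⟩ := exists_eq_ite_of_forall_eq_or_eq hval
    refine ⟨s, ?_, rfl⟩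
    have := congrArg (Multiset.count a) hm
    simpa [map_univ_ite, Multiset.count_replicate, hab.symm] using this
  · rintro ⟨s, rfl, rfl⟩
    rw [map_univ_ite, ← hkl, Nat.add_sub_cancel_left]

theorem ncard_map_univ_eq_replicate_add_replicate [DecidableEq α] {a b : α} (hab : a ≠ b)
    {k l : ℕ} (hkl : k + l = Fintype.card ι) :
    {m : ι → α | (univ : Finset ι).val.map m = replicate k a + replicate l b}.ncard =
      (Fintype.card ι).choose k := by
  have hset : {m : ι → α | (univ : Finset ι).val.map m = replicate k a + replicate l b} =
      (fun s : Finset ι => fun i => if i ∈ s then a else b) ''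
        ↑(powersetCard k (univ : Finset ι)) := by
    ext m
    simp [map_univ_eq_replicate_add_replicate_iff hab hkl, eq_comm]
  have hinj : Function.Injective fun s : Finset ι => fun i => if i ∈ s then a else b := by
    intro s t hst
    ext i
    have := congrFun hst i
    by_cases hs : i ∈ s <;> by_cases ht : i ∈ t <;> simp_all
  rw [hset, Set.ncard_image_of_injective _ hinj, Set.ncard_coe_finset, card_powersetCard,
    card_univ]

end TwoValued

theorem eq_or_eq_zero_of_sum_mul_sub_eq_zero {ι : Type*} [Fintype ι] {ε : ℤ}
    (hε : ε = 1 ∨ ε = -1) {m : ι → ℤ} (h : ∑ i, m i * (m i - ε) = 0) (i : ι) :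
    m i = ε ∨ m i = 0 := by
  have hterm : ∀ j, 0 ≤ m j * (m j - ε) := fun j => by
    rcases hε with rfl | rfl <;> nlinarith [sq_nonneg (2 * m j - 1), sq_nonneg (2 * m j + 1)]
  have hi := (Finset.sum_eq_zero_iff_of_nonneg fun j _ => hterm j).1 h i (mem_univ i)
  rcases mul_eq_zero.1 hi with hi | hi
  · exact .inr hi
  · exact .inl (sub_eq_zero.1 hi)

theorem IsExc6.degree_mem {d : ℤ} {m : Fin 6 → ℤ} (h : IsExc6 (d, m)) :
    d = 0 ∨ d = 1 ∨ d = 2 := by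
  obtain ⟨hsq, hlin⟩ := h
  have hCS : (∑ i, m i) ^ 2 ≤ 6 * ∑ i, m i ^ 2 := by
    simpa using sq_sum_le_card_mul_sum_sq (s := (univ : Finset (Fin 6))) (f := m)
  have hquad : 3 * d ^ 2 - 6 * d - 5 ≤ 0 := by nlinarith
  have hd0 : 0 ≤ d := by nlinarith
  have hd2 : d ≤ 2 := by nlinarith
  omega

theorem isExc6_ite_iff (d ε : ℤ) (hε : ε = 1 ∨ ε = -1) (s : Finset (Fin 6)) :
    IsExc6 (d, fun i => if i ∈ s then ε else 0) ↔ d ^ 2 + 1 = #s ∧ 3 * d - 1 = #s * ε := by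
  have hε2 : ε ^ 2 = 1 := by rcases hε with rfl | rfl <;> norm_num
  simp only [IsExc6, ite_pow, ne_eq, OfNat.ofNat_ne_zero, not_false_eq_true, zero_pow,
    Finset.sum_ite_mem, univ_inter, sum_const, nsmul_eq_mul, hε2]
  constructor <;> rintro ⟨h1, h2⟩ <;> constructor <;> linarith

theorem isExc6_iff_exists_ite (d : ℤ) (m : Fin 6 → ℤ) :
    IsExc6 (d, m) ↔
      (d = 0 ∧ ∃ s : Finset (Fin 6), #s = 1 ∧ m = fun i => if i ∈ s then -1 else 0) ∨
      (d = 1 ∧ ∃ s : Finset (Fin 6), #s = 2 ∧ m = fun i => if i ∈ s then 1 else 0) ∨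
      (d = 2 ∧ ∃ s : Finset (Fin 6), #s = 5 ∧ m = fun i => if i ∈ s then 1 else 0) := by
  constructor
  · intro h
    have hvec : ∀ ε, (ε = 1 ∨ ε = -1) → d ^ 2 + 1 - ε * (3 * d - 1) = 0 →
        ∃ s : Finset (Fin 6), (#s : ℤ) = d ^ 2 + 1 ∧ m = fun i => if i ∈ s then ε else 0 := by
      intro ε hε hd
      have hsum : ∑ i, m i * (m i - ε) = 0 := by
        obtain ⟨hsq, hlin⟩ := h
        have : ∑ i, m i * (m i - ε) = ∑ i, m i ^ 2 - ε * ∑ i, m i := by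
          rw [Finset.mul_sum, ← Finset.sum_sub_distrib]
          exact Finset.sum_congr rfl fun i _ => by ring
        linear_combination this - hsq + ε * hlin + hd
      obtain ⟨s, rfl⟩ := exists_eq_ite_of_forall_eq_or_eq
        (eq_or_eq_zero_of_sum_mul_sub_eq_zero hε hsum)
      exact ⟨s, ((isExc6_ite_iff d ε hε s).1 h).1.symm, rfl⟩
    rcases h.degree_mem with rfl | rfl | rfl
    · obtain ⟨s, hs, rfl⟩ := hvec (-1) (.inr rfl) (by norm_num)
      exact .inl ⟨rfl, s, by omega, rfl⟩
    · obtain ⟨s, hs, rfl⟩ := hvec 1 (.inl rfl) (by norm_num)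
      exact .inr (.inl ⟨rfl, s, by omega, rfl⟩)
    · obtain ⟨s, hs, rfl⟩ := hvec 1 (.inl rfl) (by norm_num)
      exact .inr (.inr ⟨rfl, s, by omega, rfl⟩)
  · rintro (⟨rfl, s, hs, rfl⟩ | ⟨rfl, s, hs, rfl⟩ | ⟨rfl, s, hs, rfl⟩) <;>
      simp [isExc6_ite_iff, hs]

theorem excTypes6_eq : excTypes6 =
    [(0, replicate 1 (-1) + replicate 5 0), (1, replicate 2 1 + replicate 4 0),
      (2, replicate 5 1 + replicate 1 0)] := rfl

theorem mem_excTypes6_iff (d : ℤ) (m : Fin 6 → ℤ) :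
    (d, mset6 m) ∈ excTypes6 ↔
      (d = 0 ∧ ∃ s : Finset (Fin 6), #s = 1 ∧ m = fun i => if i ∈ s then -1 else 0) ∨
      (d = 1 ∧ ∃ s : Finset (Fin 6), #s = 2 ∧ m = fun i => if i ∈ s then 1 else 0) ∨
      (d = 2 ∧ ∃ s : Finset (Fin 6), #s = 5 ∧ m = fun i => if i ∈ s then 1 else 0) := by
  simp only [excTypes6_eq, List.mem_cons, List.not_mem_nil, or_false, Prod.mk.injEq, mset6]
  rw [map_univ_eq_replicate_add_replicate_iff (by norm_num) (by simp),
    map_univ_eq_replicate_add_replicate_iff (by norm_num) (by simp),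
    map_univ_eq_replicate_add_replicate_iff (by norm_num) (by simp)]

theorem isExc6_iff_mem_excTypes6 (d : ℤ) (m : Fin 6 → ℤ) :
    IsExc6 (d, m) ↔ (d, mset6 m) ∈ excTypes6 := by
  rw [isExc6_iff_exists_ite, mem_excTypes6_iff]

def classesOfType (t : ℤ × Multiset ℤ) : Set (ℤ × (Fin 6 → ℤ)) :=
  {p | p.1 = t.1 ∧ mset6 p.2 = t.2}

theorem disjoint_classesOfType {t t' : ℤ × Multiset ℤ} (h : t.1 ≠ t'.1) :
    Disjoint (classesOfType t) (classesOfType t') :=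
  Set.disjoint_left.2 fun _ hp hp' => h (hp.1.symm.trans hp'.1)

theorem ncard_classesOfType_replicate (d : ℤ) {ε : ℤ} (hε : ε ≠ 0) {k l : ℕ}
    (hkl : k + l = 6) :
    (classesOfType (d, replicate k ε + replicate l 0)).ncard = Nat.choose 6 k := by
  have hprod : classesOfType (d, replicate k ε + replicate l 0) =
      {d} ×ˢ {m : Fin 6 → ℤ | (univ : Finset (Fin 6)).val.map m =
        replicate k ε + replicate l 0} := by
    ext; simp [classesOfType, mset6]
  rw [hprod, Set.ncard_prod, Set.ncard_singleton, one_mul,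
    ncard_map_univ_eq_replicate_add_replicate hε (by simpa using hkl), Fintype.card_fin]

theorem setOf_isExc6_eq_union :
    {p : ℤ × (Fin 6 → ℤ) | IsExc6 p} =
      classesOfType (0, replicate 1 (-1) + replicate 5 0) ∪
        (classesOfType (1, replicate 2 1 + replicate 4 0) ∪
          classesOfType (2, replicate 5 1 + replicate 1 0)) := by
  ext ⟨d, m⟩
  simp only [Set.mem_ofPred_eq, isExc6_iff_mem_excTypes6, excTypes6_eq, Set.mem_union,
    classesOfType, List.mem_cons, List.not_mem_nil, or_false, Prod.mk.injEq]

/-- `(d, m) ∈ ℤ × (Fin 6 → ℤ)` is exceptional iff `d` together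
with the multiset `{m₁, …, m₆}` is one of the three types listed in
`excTypes6`; the numbers of exceptional classes of those types are
respectively `6, 15, 6`, giving in total the `27` lines of the cubic
surface `S₆`. -/
theorem exceptional_classes_S6 :
    (∀ d : ℤ, ∀ m : Fin 6 → ℤ,
      IsExc6 (d, m) ↔ (d, mset6 m) ∈ excTypes6) ∧
    (List.map
      (fun t => {p : ℤ × (Fin 6 → ℤ) | p.1 = t.1 ∧ mset6 p.2 = t.2}.ncard)
      excTypes6 = [6, 15, 6]) ∧
    {p : ℤ × (Fin 6 → ℤ) | IsExc6 p}.ncard = 27 := by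
  have h0 := ncard_classesOfType_replicate 0 (ε := -1) (by norm_num) (k := 1) (l := 5) rfl
  have h1 := ncard_classesOfType_replicate 1 (ε := 1) (by norm_num) (k := 2) (l := 4) rfl
  have h2 := ncard_classesOfType_replicate 2 (ε := 1) (by norm_num) (k := 5) (l := 1) rfl
  refine ⟨isExc6_iff_mem_excTypes6, ?_, ?_⟩
  · change excTypes6.map (fun t => (classesOfType t).ncard) = _
    rw [excTypes6_eq, List.map_cons, List.map_cons, List.map_cons, List.map_nil, h0, h1, h2]
    rfl
  · have f0 := Set.finite_of_ncard_ne_zero (h0.trans_ne (by decide))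
    have f1 := Set.finite_of_ncard_ne_zero (h1.trans_ne (by decide))
    have f2 := Set.finite_of_ncard_ne_zero (h2.trans_ne (by decide))
    rw [setOf_isExc6_eq_union, Set.ncard_union_eq _ f0 (f1.union f2),
      Set.ncard_union_eq (disjoint_classesOfType (by norm_num)) f1 f2, h0, h1, h2]
    · rfl
    · exact (disjoint_classesOfType (by norm_num)).union_right
        (disjoint_classesOfType (by norm_num))
end

section
/- Let a ∈ ℤ and b : Fin 8 → ℤ satisfy b_i ≥ 0 for all i, ∑_i b_i = 3a − 2 and ∑_i b_i² = a². Then either a = 1 and the class (a,b) equals l − e_i for some i (i.e. b_i = 1 for exactly one index i and b_j = 0 for j ≠ i), or there exist exceptional classes ξ₁, ξ₂ ∈ E_8 with ξ₁ + ξ₂ = (a, b). -/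
open Finset
open scoped Pointwise

section Sums

variable {ι : Type*} [Fintype ι]

theorem sum_card_mul_sub_sum_sq {R : Type*} [CommRing R] (b : ι → R) :
    ∑ i, (Fintype.card ι * b i - ∑ j, b j) ^ 2
      = Fintype.card ι * (Fintype.card ι * ∑ i, b i ^ 2 - (∑ i, b i) ^ 2) := by
  simp only [sub_sq, sum_add_distrib, sum_sub_distrib, mul_pow, ← mul_sum, ← sum_mul, sum_const,
    card_univ, nsmul_eq_mul]
  ring

theorem card_mul_sq_sub_le {R : Type*} [CommRing R] [LinearOrder R] [IsStrictOrderedRing R]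
    (b : ι → R) {i j : ι} (hij : i ≠ j) :
    Fintype.card ι * (b i - b j) ^ 2 ≤ 2 * (Fintype.card ι * ∑ k, b k ^ 2 - (∑ k, b k) ^ 2) := by
  set n : R := (Fintype.card ι : R)
  set s := ∑ k, b k
  have hn : 0 < n := by simpa [n] using Fintype.card_pos_iff.2 ⟨i⟩
  have hpair : (n * b i - s) ^ 2 + (n * b j - s) ^ 2 ≤ n * (n * ∑ k, b k ^ 2 - s ^ 2) :=
    sum_card_mul_sub_sum_sq b ▸
      add_le_sum (fun k _ => sq_nonneg (n * b k - s)) (mem_univ i) (mem_univ j) hij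
  have hsq : n * (n * (b i - b j) ^ 2) ≤ 2 * ((n * b i - s) ^ 2 + (n * b j - s) ^ 2) := by
    nlinarith [sq_nonneg (n * b i + n * b j - 2 * s)]
  nlinarith

theorem sum_sub_mul_sub_sub_one {R : Type*} [CommRing R] (b : ι → R) (v : R) :
    ∑ i, (b i - v) * (b i - v - 1)
      = ∑ i, b i ^ 2 - (2 * v + 1) * ∑ i, b i + Fintype.card ι * (v * (v + 1)) := by
  have h : ∀ i, (b i - v) * (b i - v - 1) = b i ^ 2 - (2 * v + 1) * b i + v * (v + 1) := by
    intro i; ring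
  simp only [h, sum_add_distrib, sum_sub_distrib, ← mul_sum, sum_const, card_univ, nsmul_eq_mul]
  ring

theorem sum_eq_add_of_forall_ne_eq {M : Type*} [AddCommMonoid M] [DecidableEq ι] {f : ι → M}
    (i : ι) {c : M} (h : ∀ j ≠ i, f j = c) : ∑ j, f j = f i + (Fintype.card ι - 1) • c := by
  rw [Fintype.sum_eq_add_sum_compl i, sum_congr rfl fun j hj => h j (by simpa using hj),
    sum_const, card_compl, card_singleton]

end Sums

namespace DelPezzo

variable {ι : Type*} [Fintype ι]

def pairing (x y : ℤ × (ι → ℤ)) : ℤ := x.1 * y.1 - ∑ i, x.2 i * y.2 i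

@[simps] def l : ℤ × (ι → ℤ) := (1, 0)

@[simps] def e [DecidableEq ι] (i : ι) : ℤ × (ι → ℤ) := (0, Pi.single i (-1))

@[simps] def K : ℤ × (ι → ℤ) := (-3, fun _ => -1)

theorem pairing_comm (x y : ℤ × (ι → ℤ)) : pairing x y = pairing y x := by
  simp only [pairing, mul_comm]

@[simp] theorem pairing_add_left (x y z : ℤ × (ι → ℤ)) :
    pairing (x + y) z = pairing x z + pairing y z := by
  simp only [pairing, Prod.fst_add, Prod.snd_add, Pi.add_apply, add_mul, sum_add_distrib]; ring

@[simp] theorem pairing_sub_left (x y z : ℤ × (ι → ℤ)) :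
    pairing (x - y) z = pairing x z - pairing y z := by
  simp only [pairing, Prod.fst_sub, Prod.snd_sub, Pi.sub_apply, sub_mul, sum_sub_distrib]; ring

@[simp] theorem pairing_smul_left (n : ℤ) (x y : ℤ × (ι → ℤ)) :
    pairing (n • x) y = n * pairing x y := by
  simp only [pairing, Prod.smul_fst, Prod.smul_snd, Pi.smul_apply, smul_eq_mul, mul_sub, mul_sum,
    mul_assoc]

@[simp] theorem pairing_add_right (x y z : ℤ × (ι → ℤ)) :
    pairing x (y + z) = pairing x y + pairing x z := by
  rw [pairing_comm, pairing_add_left, pairing_comm y, pairing_comm z]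

@[simp] theorem pairing_sub_right (x y z : ℤ × (ι → ℤ)) :
    pairing x (y - z) = pairing x y - pairing x z := by
  rw [pairing_comm, pairing_sub_left, pairing_comm y, pairing_comm z]

@[simp] theorem pairing_smul_right (n : ℤ) (x y : ℤ × (ι → ℤ)) :
    pairing x (n • y) = n * pairing x y := by
  rw [pairing_comm, pairing_smul_left, pairing_comm]

@[simp] theorem pairing_l (x : ℤ × (ι → ℤ)) : pairing x l = x.1 := by
  simp [pairing, l]

@[simp] theorem pairing_e [DecidableEq ι] (x : ℤ × (ι → ℤ)) (i : ι) : pairing x (e i) = x.2 i := by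
  simp [pairing, e, Pi.single_apply]

@[simp] theorem pairing_K (x : ℤ × (ι → ℤ)) : pairing x K = ∑ i, x.2 i - 3 * x.1 := by
  simp [pairing, K]; ring

theorem mem_E8_iff {ξ : ℤ × (Fin 8 → ℤ)} : ξ ∈ E8 ↔ pairing ξ ξ = -1 ∧ pairing ξ K = -1 := by
  rw [pairing_K]
  simp only [E8, Set.mem_ofPred_eq, pairing, sq]
  constructor <;> rintro ⟨h, h'⟩ <;> exact ⟨h, by linarith⟩

theorem mem_E8_add_E8_of_pairing_eq_zero {x ξ : ℤ × (Fin 8 → ℤ)} (hxx : pairing x x = 0)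
    (hxK : pairing x K = -2) (hξ : ξ ∈ E8) (hxξ : pairing x ξ = 0) : x ∈ E8 + E8 := by
  rw [mem_E8_iff] at hξ
  refine ⟨ξ, mem_E8_iff.2 hξ, x - ξ, mem_E8_iff.2 ⟨?_, ?_⟩, add_sub_cancel ξ x⟩
  · rw [pairing_sub_left, pairing_sub_right, pairing_sub_right, pairing_comm ξ x]; linarith
  · rw [pairing_sub_left]; linarith

theorem e_mem_E8 (j : Fin 8) : e j ∈ E8 := by
  rw [mem_E8_iff]; simp

theorem e_sub_e_sub_K_mem_E8 {j k : Fin 8} (hjk : j ≠ k) : e j - e k - K ∈ E8 := by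
  rw [mem_E8_iff]; simp [hjk, hjk.symm, sum_add_distrib, sum_sub_distrib]

theorem e_add_e_sub_l_sub_two_smul_K_mem_E8 {p q : Fin 8} (hpq : p ≠ q) :
    e p + e q - l - (2 : ℤ) • K ∈ E8 := by
  rw [mem_E8_iff]; simp [hpq, hpq.symm, two_smul, sum_add_distrib]

end DelPezzo

section Fin8

variable {a : ℤ} {b : Fin 8 → ℤ}

theorem abs_sub_le_two (h1 : ∑ i, b i = 3 * a - 2) (h2 : ∑ i, b i ^ 2 = a ^ 2) (i j : Fin 8) :
    |b i - b j| ≤ 2 := by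
  rcases eq_or_ne i j with rfl | hij
  · simp
  have h := card_mul_sq_sub_le b hij
  rw [h1, h2, Fintype.card_fin, Nat.cast_ofNat] at h
  exact abs_le.2 ⟨by nlinarith [sq_nonneg (a - 6)], by nlinarith [sq_nonneg (a - 6)]⟩

theorem eq_or_eq_add_one_of_forall_le (h1 : ∑ i, b i = 3 * a - 2) (h2 : ∑ i, b i ^ 2 = a ^ 2)
    (hgap : ∀ i j, b i ≠ b j + 2) {i₀ : Fin 8} (hmin : ∀ i, b i₀ ≤ b i) (i : Fin 8) :
    b i = b i₀ ∨ b i = b i₀ + 1 := by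
  have := abs_le.1 (abs_sub_le_two h1 h2 i i₀)
  have := hmin i
  have := hgap i i₀
  omega

theorem eq_three_of_forall_eq_or_eq_add_one (h1 : ∑ i, b i = 3 * a - 2)
    (h2 : ∑ i, b i ^ 2 = a ^ 2) (hpos : ∀ i, 0 < b i) {v : ℤ} (hval : ∀ i, b i = v ∨ b i = v + 1)
    (hmin : ∃ i, b i = v) : v = 3 ∧ (a = 10 ∨ a = 11) := by
  have hF : a ^ 2 - (2 * v + 1) * (3 * a - 2) + 8 * (v * (v + 1)) = 0 := by
    have h := sum_sub_mul_sub_sub_one b v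
    rw [sum_eq_zero fun i _ => by rcases hval i with h | h <;> rw [h] <;> ring, h1, h2] at h
    simpa using h.symm
  have hlow : 8 * v ≤ 3 * a - 2 := by
    rw [← h1]
    simpa using card_nsmul_le_sum univ b v fun i _ => by rcases hval i with h | h <;> omega
  have hup : (3 * a - 2) ^ 2 ≤ 8 * a ^ 2 := by
    simpa [h1, h2] using sq_sum_le_card_mul_sum_sq (s := univ) (f := b)
  obtain ⟨i, hi⟩ := hmin
  have hv : 1 ≤ v := hi ▸ hpos i
  have ha : a ≤ 11 := by nlinarith
  have hv3 : v ≤ 3 := by omega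
  have ha4 : 4 ≤ a := by omega
  -- `hF` has discriminant `4v² - 12v + 1` in `a`, a perfect square for `v ≥ 1` only at `v = 3`.
  interval_cases v <;> interval_cases a <;> omega

theorem exists_ne_add_eq_sub_four (h1 : ∑ i, b i = 3 * a - 2) (h2 : ∑ i, b i ^ 2 = a ^ 2)
    (hpos : ∀ i, 0 < b i) (hgap : ∀ i j, b i ≠ b j + 2) :
    ∃ p q, p ≠ q ∧ b p + b q = a - 4 := by
  obtain ⟨i₀, hmin⟩ := Finite.exists_min b
  have hval := eq_or_eq_add_one_of_forall_le h1 h2 hgap hmin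
  obtain ⟨hv, ha⟩ := eq_three_of_forall_eq_or_eq_add_one h1 h2 hpos hval ⟨i₀, rfl⟩
  by_contra! hne
  have hothers : ∀ q ≠ i₀, b q = 14 - a := fun q hq => by
    have := hne i₀ q hq.symm
    rcases hval q with h | h <;> omega
  have hsum := sum_eq_add_of_forall_ne_eq i₀ hothers
  simp only [h1, Fintype.card_fin, Nat.add_one_sub_one, nsmul_eq_mul, Nat.cast_ofNat] at hsum
  omega

end Fin8

open DelPezzo

/-- if `a ∈ ℤ`, `b : Fin 8 → ℤ` satisfy `bᵢ ≥ 0`,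
`∑ bᵢ = 3a - 2` and `∑ bᵢ² = a²`, then either `a = 1` and `(a, b)` is
`l - eᵢ` for some `i` (i.e. `b` is the indicator of one index `i`), or
`(a, b)` is the sum of two exceptional classes `ξ₁, ξ₂ ∈ E₈`. -/
theorem square_zero_genus_zero_decomposition (a : ℤ) (b : Fin 8 → ℤ)
    (hb : ∀ i, 0 ≤ b i)
    (h1 : ∑ i, b i = 3 * a - 2) (h2 : ∑ i, (b i) ^ 2 = a ^ 2) :
    (a = 1 ∧ ∃ i, ∀ j, b j = if j = i then 1 else 0) ∨
    (∃ ξ₁ ∈ E8, ∃ ξ₂ ∈ E8, ξ₁ + ξ₂ = (a, b)) := by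
  right
  rw [← Set.mem_add]
  have hxx : pairing (a, b) (a, b) = 0 := by simp only [pairing, ← sq, h2, sub_self]
  have hxK : pairing (a, b) K = -2 := by rw [pairing_K, h1]; ring
  by_cases h0 : ∃ j, b j = 0
  · obtain ⟨j, hj⟩ := h0
    exact mem_E8_add_E8_of_pairing_eq_zero hxx hxK (e_mem_E8 j) (by simpa using hj)
  by_cases hgap : ∃ k j, b k = b j + 2
  · obtain ⟨k, j, hkj⟩ := hgap
    have hjk : j ≠ k := by rintro rfl; omega
    refine mem_E8_add_E8_of_pairing_eq_zero hxx hxK (e_sub_e_sub_K_mem_E8 hjk) ?_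
    simp only [pairing_sub_right, pairing_e, hxK]; omega
  push Not at h0 hgap
  obtain ⟨p, q, hpq, hpq_sum⟩ :=
    exists_ne_add_eq_sub_four h1 h2 (fun i => (hb i).lt_of_ne' (h0 i)) hgap
  refine mem_E8_add_E8_of_pairing_eq_zero hxx hxK (e_add_e_sub_l_sub_two_smul_K_mem_E8 hpq) ?_
  simp only [pairing_add_right, pairing_sub_right, pairing_smul_right, pairing_e, pairing_l, hxK]
  omega
end

section
/- Let r ∈ {2, 3, 4}, let k ≥ 0 be an integer, and let L = (a, b) ∈ ℤ × (Fin r → ℤ). Then ⟨L, ξ⟩ ≥ k for every exceptional class ξ ∈ E_r if and only if b_i ≥ k for all i and a ≥ b_i + b_j + k for all pairs of distinct indices i ≠ j. -/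
/-- The intersection pairing on `Λ_r = ℤ × (Fin r → ℤ)`:
`⟨(a,b),(d,m)⟩ = a·d - ∑ bᵢ·mᵢ`. -/
def pairing {r : ℕ} (L ξ : ℤ × (Fin r → ℤ)) : ℤ :=
  L.1 * ξ.1 - ∑ i, L.2 i * ξ.2 i

/-- A class `(d, m)` in `Λ_r` is exceptional if `d² - ∑ mᵢ² = -1` and
`3d - ∑ mᵢ = 1`. -/
def IsExc {r : ℕ} (p : ℤ × (Fin r → ℤ)) : Prop :=
  p.1 ^ 2 - ∑ i, (p.2 i) ^ 2 = -1 ∧ 3 * p.1 - ∑ i, p.2 i = 1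

/-!
For `r ≤ 4` the exceptional classes are exactly `eᵢ` and `l - eᵢ - eⱼ` (`i ≠ j`), so the
condition on `L` reads `bᵢ ≥ k` and `a - bᵢ - bⱼ ≥ k`. For an exceptional `(d, m)`,
Cauchy–Schwarz gives `(3d - 1)² = (∑ mᵢ)² ≤ r ∑ mᵢ² = r (d² + 1) ≤ 4 (d² + 1)`, whence `d ∈ {0, 1}`.
In both cases `±m` satisfies `∑ mᵢ² = ∑ mᵢ`, i.e. `∑ mᵢ (mᵢ - 1) = 0` with nonnegative terms,
so `±m` is a 0/1 vector with `∑ mᵢ` ones.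
-/

open Finset

section ZeroOneVectors

variable {ι : Type*} [Fintype ι] {m : ι → ℤ}

lemma eq_zero_or_one_of_sum_sq_eq_sum (h : ∑ i, m i ^ 2 = ∑ i, m i) (i : ι) :
    m i = 0 ∨ m i = 1 := by
  have hterm : ∀ t : ℤ, 0 ≤ t * (t - 1) := fun t => by
    rcases le_or_gt t 0 with ht | ht <;> nlinarith
  have hsum : ∑ t, m t * (m t - 1) = 0 := by
    simp only [mul_sub, mul_one, sum_sub_distrib, ← sq, h, sub_self]
  have := (sum_eq_zero_iff_of_nonneg fun t _ => hterm (m t)).mp hsum i (mem_univ i)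
  rcases mul_eq_zero.mp this with h0 | h1
  · exact .inl h0
  · exact .inr (by omega)

lemma eq_sum_single_of_eq_zero_or_one [DecidableEq ι] (hm : ∀ i, m i = 0 ∨ m i = 1) :
    m = ∑ i ∈ univ.filter (m · = 1), Pi.single i 1 := by
  funext t
  rcases hm t with ht | ht <;> simp [Finset.sum_apply, Pi.single_apply, ht]

lemma sum_eq_card_of_eq_zero_or_one (hm : ∀ i, m i = 0 ∨ m i = 1) :
    ∑ i, m i = #(univ.filter (m · = 1)) := by
  rw [← sum_boole]
  exact sum_congr rfl fun i _ => by rcases hm i with h | h <;> simp [h]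

lemma exists_eq_single_of_sum_sq_eq_sum_eq_one [DecidableEq ι]
    (h : ∑ i, m i ^ 2 = ∑ i, m i) (h1 : ∑ i, m i = 1) : ∃ i, m = Pi.single i 1 := by
  have hm := eq_zero_or_one_of_sum_sq_eq_sum h
  obtain ⟨i, hS⟩ := card_eq_one.mp <| by
    exact_mod_cast (sum_eq_card_of_eq_zero_or_one hm).symm.trans h1
  exact ⟨i, by rw [eq_sum_single_of_eq_zero_or_one hm, hS, sum_singleton]⟩

lemma exists_eq_single_add_single_of_sum_sq_eq_sum_eq_two [DecidableEq ι]
    (h : ∑ i, m i ^ 2 = ∑ i, m i) (h2 : ∑ i, m i = 2) :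
    ∃ i j, i ≠ j ∧ m = Pi.single i 1 + Pi.single j 1 := by
  have hm := eq_zero_or_one_of_sum_sq_eq_sum h
  obtain ⟨i, j, hij, hS⟩ := card_eq_two.mp <| by
    exact_mod_cast (sum_eq_card_of_eq_zero_or_one hm).symm.trans h2
  exact ⟨i, j, hij, by rw [eq_sum_single_of_eq_zero_or_one hm, hS, sum_pair hij]⟩

end ZeroOneVectors

section ExceptionalClasses

variable {r : ℕ}

lemma pairing_neg_single (a : ℤ) (b : Fin r → ℤ) (i : Fin r) :
    pairing (a, b) (0, -Pi.single i 1) = b i := by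
  simp [pairing, Pi.single_apply]

lemma pairing_single_add_single (a : ℤ) (b : Fin r → ℤ) (i j : Fin r) :
    pairing (a, b) (1, Pi.single i 1 + Pi.single j 1) = a - b i - b j := by
  simp [pairing, Pi.single_apply, mul_add, sum_add_distrib]
  ring

lemma isExc_neg_single (i : Fin r) : IsExc ((0, -Pi.single i 1) : ℤ × (Fin r → ℤ)) := by
  simp [IsExc, Pi.single_apply]

lemma isExc_single_add_single {i j : Fin r} (hij : i ≠ j) :
    IsExc ((1, Pi.single i 1 + Pi.single j 1) : ℤ × (Fin r → ℤ)) := by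
  have hsq : ∀ t, (Pi.single i 1 + Pi.single j 1 : Fin r → ℤ) t ^ 2
      = (Pi.single i 1 + Pi.single j 1 : Fin r → ℤ) t := by
    intro t
    rcases eq_or_ne t i with rfl | hi <;> rcases eq_or_ne t j with rfl | hj <;>
      simp_all
  have hsum : ∑ t, (Pi.single i 1 + Pi.single j 1 : Fin r → ℤ) t = 2 := by
    simp [sum_add_distrib]
  simp only [IsExc, hsq, hsum]
  norm_num

lemma IsExc.fst_eq_zero_or_one {ξ : ℤ × (Fin r → ℤ)} (hξ : IsExc ξ) (hr : r ≤ 4) :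
    ξ.1 = 0 ∨ ξ.1 = 1 := by
  obtain ⟨hsq, hlin⟩ := hξ
  have hcs := sq_sum_le_card_mul_sum_sq (s := univ) (f := ξ.2)
  rw [card_univ, Fintype.card_fin] at hcs
  have : (3 * ξ.1 - 1) ^ 2 ≤ 4 * (ξ.1 ^ 2 + 1) := by
    calc (3 * ξ.1 - 1) ^ 2 = (∑ i, ξ.2 i) ^ 2 := by rw [← hlin]; ring
      _ ≤ r * ∑ i, ξ.2 i ^ 2 := hcs
      _ ≤ 4 * ∑ i, ξ.2 i ^ 2 := by gcongr; exact_mod_cast hr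
      _ = 4 * (ξ.1 ^ 2 + 1) := by linarith
  have : 0 ≤ ξ.1 := by nlinarith
  have : ξ.1 ≤ 1 := by nlinarith
  omega

/-- `(0, -Pi.single i 1)` encodes `eᵢ` and `(1, Pi.single i 1 + Pi.single j 1)` encodes
`l - eᵢ - eⱼ`. -/
theorem isExc_iff_of_le_four (hr : r ≤ 4) {ξ : ℤ × (Fin r → ℤ)} :
    IsExc ξ ↔ (∃ i, ξ = (0, -Pi.single i 1)) ∨
      ∃ i j, i ≠ j ∧ ξ = (1, Pi.single i 1 + Pi.single j 1) := by
  refine ⟨fun hξ => ?_, ?_⟩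
  · obtain ⟨d, m⟩ := ξ
    rcases hξ.fst_eq_zero_or_one hr with rfl | rfl <;> obtain ⟨hsq, hlin⟩ := hξ
    · obtain ⟨i, hi⟩ := exists_eq_single_of_sum_sq_eq_sum_eq_one (m := -m)
        (by simp only [Pi.neg_apply, neg_sq, sum_neg_distrib]; linarith)
        (by simp only [Pi.neg_apply, sum_neg_distrib]; linarith)
      exact .inl ⟨i, by rw [← hi, neg_neg]⟩
    · obtain ⟨i, j, hij, rfl⟩ := exists_eq_single_add_single_of_sum_sq_eq_sum_eq_two (m := m)
        (by linarith) (by linarith)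
      exact .inr ⟨i, j, hij, rfl⟩
  · rintro (⟨i, rfl⟩ | ⟨i, j, hij, rfl⟩)
    · exact isExc_neg_single i
    · exact isExc_single_add_single hij

end ExceptionalClasses

theorem k_very_ample_criterion_r234_general (r : ℕ) (hr : r = 2 ∨ r = 3 ∨ r = 4)
    (k : ℤ) (a : ℤ) (b : Fin r → ℤ) :
    (∀ ξ : ℤ × (Fin r → ℤ), IsExc ξ → k ≤ pairing (a, b) ξ) ↔
      ((∀ i, k ≤ b i) ∧
       (∀ i j, i ≠ j → b i + b j + k ≤ a)) := by
  simp only [isExc_iff_of_le_four (by omega : r ≤ 4), or_imp, forall_and, forall_exists_index,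
    @forall_comm (ℤ × (Fin r → ℤ)), forall_eq, and_imp, pairing_neg_single,
    pairing_single_add_single, sub_sub, le_sub_iff_add_le']

/-- for `r ∈ {2,3,4}` and `k ≥ 0`, a class `L = (a, b)` satisfies
`⟨L, ξ⟩ ≥ k` for every exceptional class `ξ` iff `bᵢ ≥ k` for all `i` and
`a ≥ bᵢ + bⱼ + k` for all `i ≠ j`. -/
theorem k_very_ample_criterion_r234 (r : ℕ) (hr : r = 2 ∨ r = 3 ∨ r = 4)
    (k : ℤ) (hk : 0 ≤ k) (a : ℤ) (b : Fin r → ℤ) :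
    (∀ ξ : ℤ × (Fin r → ℤ), IsExc ξ → k ≤ pairing (a, b) ξ) ↔
      ((∀ i, k ≤ b i) ∧
       (∀ i j, i ≠ j → b i + b j + k ≤ a)) :=
  k_very_ample_criterion_r234_general r hr k a b
end

section
/- Let r ∈ {5, 6}, let k ≥ 0 be an integer, and let L = (a, b) ∈ ℤ × (Fin r → ℤ). Then ⟨L, ξ⟩ ≥ k for every exceptional class ξ ∈ E_r if and only if: b_i ≥ k for all i; a ≥ b_i + b_j + k for all distinct i ≠ j; and 2a ≥ ∑_{i∈T} b_i + k for every 5-element subset T of Fin r. -/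
/-!
By Cauchy–Schwarz, an exceptional class `(d, m)` on at most six points satisfies
`(3d - 1)² = (∑ mᵢ)² ≤ 6 ∑ mᵢ² = 6 (d² + 1)`, so `0 ≤ d ≤ 2`. In each of these degrees
`∑ mᵢ² = ±∑ mᵢ`, which forces every `mᵢ` into `{0, ±1}`. Hence the exceptional classes are exactly
`eᵢ`, `l - eᵢ - eⱼ` and `2l - ∑_{i ∈ T} eᵢ` with `#T = 5`, and `L = (a, b)` pairs with them to
`bᵢ`, `a - bᵢ - bⱼ` and `2a - ∑_{i ∈ T} bᵢ`.
-/

open Finset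

lemma exists_eq_ite_of_sum_sq_eq_mul_sum {ι : Type*} [Fintype ι] [DecidableEq ι]
    {m : ι → ℤ} {c : ℤ} (hc : c = 1 ∨ c = -1) (h : ∑ i, m i ^ 2 = c * ∑ i, m i) :
    ∃ T : Finset ι, m = fun i => if i ∈ T then c else 0 := by
  have hsum : ∑ i, m i * (m i - c) = 0 := by
    simp only [mul_sub, sum_sub_distrib, ← sq, h, ← sum_mul, mul_comm c, sub_self]
  -- no integer lies strictly between `0` and `c = ±1`
  have hnonneg : ∀ i ∈ univ, 0 ≤ m i * (m i - c) := by
    intro i _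
    obtain hi | hi : m i ≤ min 0 c ∨ max 0 c ≤ m i := by omega
    · nlinarith [min_le_left 0 c, min_le_right 0 c]
    · nlinarith [le_max_left 0 c, le_max_right 0 c]
  refine ⟨univ.filter (m · ≠ 0), funext fun i => ?_⟩
  have hi := (sum_eq_zero_iff_of_nonneg hnonneg).1 hsum i (mem_univ i)
  rcases mul_eq_zero.1 hi with hi | hi
  · simp [hi]
  · have : c ≠ 0 := by omega
    simp [sub_eq_zero.1 hi, this]

variable {r : ℕ}

/-- The class `d·l - c·∑_{i ∈ T} eᵢ`. -/
def uniformClass (d c : ℤ) (T : Finset (Fin r)) : ℤ × (Fin r → ℤ) :=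
  (d, fun i => if i ∈ T then c else 0)

lemma pairing_uniformClass (a : ℤ) (b : Fin r → ℤ) (d c : ℤ) (T : Finset (Fin r)) :
    pairing (a, b) (uniformClass d c T) = a * d - c * ∑ i ∈ T, b i := by
  simp [pairing, uniformClass, mul_sum, mul_comm]

lemma isExc_uniformClass_iff (d c : ℤ) (T : Finset (Fin r)) :
    IsExc (uniformClass d c T) ↔ d ^ 2 - c ^ 2 * #T = -1 ∧ 3 * d - c * #T = 1 := by
  simp [IsExc, uniformClass, ite_pow, mul_comm]

lemma IsExc.degree_mem_Icc (hr : r ≤ 6) {ξ : ℤ × (Fin r → ℤ)} (h : IsExc ξ) :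
    0 ≤ ξ.1 ∧ ξ.1 ≤ 2 := by
  obtain ⟨hsq, hlin⟩ := h
  have hr' : (r : ℤ) ≤ 6 := by exact_mod_cast hr
  have hcs : (3 * ξ.1 - 1) ^ 2 ≤ 6 * (ξ.1 ^ 2 + 1) := calc
    (3 * ξ.1 - 1) ^ 2 = (∑ i, ξ.2 i) ^ 2 := by congr 1; linarith
    _ ≤ r * ∑ i, ξ.2 i ^ 2 := by simpa using sq_sum_le_card_mul_sum_sq (s := univ) (f := ξ.2)
    _ = r * (ξ.1 ^ 2 + 1) := by congr 1; linarith
    _ ≤ 6 * (ξ.1 ^ 2 + 1) := by gcongr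
  constructor <;> nlinarith

lemma isExc_iff_exists_uniformClass (hr : r ≤ 6) {ξ : ℤ × (Fin r → ℤ)} :
    IsExc ξ ↔ ∃ T : Finset (Fin r),
      (#T = 1 ∧ ξ = uniformClass 0 (-1) T) ∨ (#T = 2 ∧ ξ = uniformClass 1 1 T) ∨
        (#T = 5 ∧ ξ = uniformClass 2 1 T) := by
  constructor
  · intro h
    obtain ⟨hd₀, hd₂⟩ := h.degree_mem_Icc hr
    obtain ⟨d, m⟩ := ξ
    obtain ⟨hsq, hlin⟩ := id h
    dsimp only at hd₀ hd₂ hsq hlin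
    -- `∑ mᵢ² = d² + 1` and `∑ mᵢ = 3d - 1` coincide for `d = 1, 2` and are opposite for `d = 0`
    interval_cases d
    · obtain ⟨T, rfl⟩ := exists_eq_ite_of_sum_sq_eq_mul_sum (Or.inr rfl) (by linarith)
      replace h := (isExc_uniformClass_iff 0 (-1) T).1 h
      exact ⟨T, .inl ⟨by omega, rfl⟩⟩
    · obtain ⟨T, rfl⟩ := exists_eq_ite_of_sum_sq_eq_mul_sum (Or.inl rfl) (by linarith)
      replace h := (isExc_uniformClass_iff 1 1 T).1 h
      exact ⟨T, .inr (.inl ⟨by omega, rfl⟩)⟩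
    · obtain ⟨T, rfl⟩ := exists_eq_ite_of_sum_sq_eq_mul_sum (Or.inl rfl) (by linarith)
      replace h := (isExc_uniformClass_iff 2 1 T).1 h
      exact ⟨T, .inr (.inr ⟨by omega, rfl⟩)⟩
  · rintro ⟨T, ⟨hT, rfl⟩ | ⟨hT, rfl⟩ | ⟨hT, rfl⟩⟩ <;>
      simp [isExc_uniformClass_iff, hT]

theorem k_very_ample_criterion_r56_general (r : ℕ) (hr : r = 5 ∨ r = 6)
    (k : ℤ) (a : ℤ) (b : Fin r → ℤ) :
    (∀ ξ : ℤ × (Fin r → ℤ), IsExc ξ → k ≤ pairing (a, b) ξ) ↔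
      ((∀ i, k ≤ b i) ∧
       (∀ i j, i ≠ j → b i + b j + k ≤ a) ∧
       (∀ T : Finset (Fin r), T.card = 5 → (∑ i ∈ T, b i) + k ≤ 2 * a)) := by
  have hr₆ : r ≤ 6 := by omega
  simp only [isExc_iff_exists_uniformClass hr₆]
  constructor
  · intro H
    refine ⟨fun i => ?_, fun i j hij => ?_, fun T hT => ?_⟩
    · have := H _ ⟨{i}, .inl ⟨card_singleton i, rfl⟩⟩
      simp only [pairing_uniformClass, sum_singleton] at this
      linarith
    · have := H _ ⟨{i, j}, .inr (.inl ⟨card_pair hij, rfl⟩)⟩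
      simp only [pairing_uniformClass, sum_pair hij] at this
      linarith
    · have := H _ ⟨T, .inr (.inr ⟨hT, rfl⟩)⟩
      simp only [pairing_uniformClass] at this
      linarith
  · rintro ⟨hsingle, hpair, hfive⟩ ξ ⟨T, ⟨hT, rfl⟩ | ⟨hT, rfl⟩ | ⟨hT, rfl⟩⟩ <;>
      rw [pairing_uniformClass]
    · obtain ⟨i, rfl⟩ := card_eq_one.1 hT
      simpa using hsingle i
    · obtain ⟨i, j, hij, rfl⟩ := card_eq_two.1 hT
      rw [sum_pair hij]
      linarith [hpair i j hij]
    · linarith [hfive T hT]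

/-- for `r ∈ {5,6}` and `k ≥ 0`, a class `L = (a, b)` satisfies
`⟨L, ξ⟩ ≥ k` for every exceptional class `ξ` iff `bᵢ ≥ k` for all `i`,
`a ≥ bᵢ + bⱼ + k` for all `i ≠ j`, and `2a ≥ ∑_{i ∈ T} bᵢ + k` for every
5-element subset `T` of `Fin r`. -/
theorem k_very_ample_criterion_r56 (r : ℕ) (hr : r = 5 ∨ r = 6)
    (k : ℤ) (hk : 0 ≤ k) (a : ℤ) (b : Fin r → ℤ) :
    (∀ ξ : ℤ × (Fin r → ℤ), IsExc ξ → k ≤ pairing (a, b) ξ) ↔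
      ((∀ i, k ≤ b i) ∧
       (∀ i j, i ≠ j → b i + b j + k ≤ a) ∧
       (∀ T : Finset (Fin r), T.card = 5 → (∑ i ∈ T, b i) + k ≤ 2 * a)) :=
  k_very_ample_criterion_r56_general r hr k a b
end

section
/- Let k ≥ 0 be an integer and let L = (a, b) ∈ ℤ × (Fin 7 → ℤ). Then ⟨L, ξ⟩ ≥ k for every exceptional class ξ ∈ E_7 if and only if: b_i ≥ k for all i; a ≥ b_i + b_j + k for all distinct i ≠ j; 2a ≥ ∑_{i∈T} b_i + k for every 5-element subset T of Fin 7; and 3a ≥ 2b_i + ∑_{j ≠ i} b_j + k for every index i. -/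
/-! Write an exceptional class as `(d, m)`. Cauchy–Schwarz, `(3d - 1)² = (∑ mᵢ)² ≤ 7 ∑ mᵢ² = 7(d² + 1)`,
confines the degree to `0 ≤ d ≤ 3`. For `d = 1, 2` one has `∑ mᵢ² = ∑ mᵢ`, and so do `-m` for `d = 0`
and `m - 1` for `d = 3`; since `x² ≥ x` on `ℤ`, such an integer vector is the indicator of a set,
whose size is its coordinate sum. Hence `E₇` consists of the 56 classes `eᵢ`, `l - eᵢ - eⱼ`,
`2l - ∑_{i ∈ T} eᵢ` with `#T = 5`, and `3l - ∑ⱼ eⱼ - eᵢ`, and the four families of inequalities are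
`⟨L, ξ⟩ ≥ k` for these. -/

/-- The intersection pairing on `Λ₇ = ℤ × (Fin 7 → ℤ)`:
`⟨(a,b),(d,m)⟩ = a·d - ∑ bᵢ·mᵢ`. -/
def pairing7 (L ξ : ℤ × (Fin 7 → ℤ)) : ℤ :=
  L.1 * ξ.1 - ∑ i, L.2 i * ξ.2 i

/-- A class `(d, m)` in `Λ₇` is exceptional if `d² - ∑ mᵢ² = -1` and
`3d - ∑ mᵢ = 1`. -/
def IsExc7 (p : ℤ × (Fin 7 → ℤ)) : Prop :=
  p.1 ^ 2 - ∑ i, (p.2 i) ^ 2 = -1 ∧ 3 * p.1 - ∑ i, p.2 i = 1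

open Finset

section IndicatorVec

variable {ι : Type*} [DecidableEq ι]

def indicatorVec (T : Finset ι) (j : ι) : ℤ := if j ∈ T then 1 else 0

lemma indicatorVec_sq (T : Finset ι) (j : ι) : indicatorVec T j ^ 2 = indicatorVec T j := by
  unfold indicatorVec; split_ifs <;> norm_num

variable [Fintype ι]

lemma sum_mul_indicatorVec (b : ι → ℤ) (T : Finset ι) :
    ∑ j, b j * indicatorVec T j = ∑ j ∈ T, b j := by
  simp [indicatorVec, sum_ite_mem]

lemma sum_indicatorVec (T : Finset ι) : ∑ j, indicatorVec T j = #T := by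
  simpa using sum_mul_indicatorVec 1 T

lemma sum_indicatorVec_sq (T : Finset ι) : ∑ j, indicatorVec T j ^ 2 = #T := by
  simp only [indicatorVec_sq, sum_indicatorVec]

lemma exists_eq_indicatorVec_of_sum_sq_eq_sum {m : ι → ℤ}
    (h : ∑ i, m i ^ 2 = ∑ i, m i) : ∃ T : Finset ι, #T = ∑ i, m i ∧ m = indicatorVec T := by
  have hzero : ∀ i ∈ univ, m i ^ 2 - m i = 0 :=
    (sum_eq_zero_iff_of_nonneg fun i _ ↦ sub_nonneg.2 (Int.le_self_sq (m i))).1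
      (by rw [sum_sub_distrib, h, sub_self])
  set T : Finset ι := {i | m i = 1}
  suffices hm : m = indicatorVec T from ⟨T, by rw [hm, sum_indicatorVec], hm⟩
  refine funext fun i ↦ ?_
  have : m i * (m i - 1) = 0 := by linear_combination hzero i (mem_univ i)
  rcases mul_eq_zero.1 this with h0 | h1
  · simp [T, indicatorVec, h0]
  · simp [T, indicatorVec, sub_eq_zero.1 h1]

end IndicatorVec

lemma IsExc7.degree_mem_Icc {d : ℤ} {m : Fin 7 → ℤ} (h : IsExc7 (d, m)) : d ∈ Set.Icc 0 3 := by
  obtain ⟨hsq, hsum⟩ := h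
  have hcs := sq_sum_le_card_mul_sum_sq (s := univ) (f := m)
  simp only [card_univ, Fintype.card_fin, Nat.cast_ofNat] at hcs
  rw [show ∑ i, m i = 3 * d - 1 by linarith, show ∑ i, m i ^ 2 = d ^ 2 + 1 by linarith] at hcs
  constructor <;> nlinarith

theorem isExc7_iff (ξ : ℤ × (Fin 7 → ℤ)) :
    IsExc7 ξ ↔
      (∃ i, (0, -indicatorVec {i}) = ξ) ∨
      (∃ T : Finset (Fin 7), #T = 2 ∧ (1, indicatorVec T) = ξ) ∨
      (∃ T : Finset (Fin 7), #T = 5 ∧ (2, indicatorVec T) = ξ) ∨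
      (∃ i, (3, 1 + indicatorVec {i}) = ξ) := by
  constructor
  · obtain ⟨d, m⟩ := ξ
    intro h
    obtain ⟨hd0, hd3⟩ := h.degree_mem_Icc
    obtain ⟨hsq, hsum⟩ := h
    replace hsq : ∑ i, m i ^ 2 = d ^ 2 + 1 := by linarith
    replace hsum : ∑ i, m i = 3 * d - 1 := by linarith
    interval_cases d
    · obtain ⟨T, hT, hm⟩ := exists_eq_indicatorVec_of_sum_sq_eq_sum (m := -m) (by simp [hsq, hsum])
      obtain ⟨i, rfl⟩ := card_eq_one.1 (by simpa [hsum] using hT)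
      exact Or.inl ⟨i, by rw [← hm, neg_neg]⟩
    · obtain ⟨T, hT, rfl⟩ := exists_eq_indicatorVec_of_sum_sq_eq_sum (hsq.trans hsum.symm)
      exact Or.inr (Or.inl ⟨T, by zify; simpa [hsum] using hT, rfl⟩)
    · obtain ⟨T, hT, rfl⟩ := exists_eq_indicatorVec_of_sum_sq_eq_sum (hsq.trans hsum.symm)
      exact Or.inr (Or.inr (Or.inl ⟨T, by zify; simpa [hsum] using hT, rfl⟩))
    · obtain ⟨T, hT, hm⟩ := exists_eq_indicatorVec_of_sum_sq_eq_sum (m := m - 1) (by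
        simp only [Pi.sub_apply, Pi.one_apply, sub_sq, mul_one, sum_add_distrib, sum_sub_distrib,
          ← mul_sum, hsq, hsum]
        simp)
      obtain ⟨i, rfl⟩ := card_eq_one.1 (by simpa [hsum] using hT)
      exact Or.inr (Or.inr (Or.inr ⟨i, by rw [← hm, add_sub_cancel]⟩))
  · rintro (⟨i, rfl⟩ | ⟨T, hT, rfl⟩ | ⟨T, hT, rfl⟩ | ⟨i, rfl⟩)
    · simp [IsExc7, sum_indicatorVec, sum_indicatorVec_sq]
    · simp [IsExc7, sum_indicatorVec, sum_indicatorVec_sq, hT]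
    · simp [IsExc7, sum_indicatorVec, sum_indicatorVec_sq, hT]
    · simp only [IsExc7, Pi.add_apply, Pi.one_apply, add_sq, indicatorVec_sq, sum_add_distrib,
        ← mul_sum, sum_indicatorVec]
      simp

lemma pairing7_indicatorVec (L : ℤ × (Fin 7 → ℤ)) (d : ℤ) (T : Finset (Fin 7)) :
    pairing7 L (d, indicatorVec T) = d * L.1 - ∑ j ∈ T, L.2 j := by
  rw [pairing7, sum_mul_indicatorVec, mul_comm]

lemma pairing7_neg_indicatorVec_singleton (L : ℤ × (Fin 7 → ℤ)) (i : Fin 7) :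
    pairing7 L (0, -indicatorVec {i}) = L.2 i := by
  simp [pairing7, sum_mul_indicatorVec]

lemma pairing7_one_add_indicatorVec_singleton (L : ℤ × (Fin 7 → ℤ)) (i : Fin 7) :
    pairing7 L (3, 1 + indicatorVec {i}) = 3 * L.1 - (2 * L.2 i + ∑ j ∈ univ \ {i}, L.2 j) := by
  simp only [pairing7, Pi.add_apply, Pi.one_apply, mul_add, mul_one, sum_add_distrib,
    sum_mul_indicatorVec, sum_singleton, sum_eq_add_sum_sdiff_singleton_of_mem (mem_univ i) L.2]
  ring

lemma Finset.forall_card_eq_two_iff {α : Type*} [DecidableEq α] {P : Finset α → Prop} :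
    (∀ T : Finset α, #T = 2 → P T) ↔ ∀ i j, i ≠ j → P {i, j} := by
  simp only [card_eq_two]
  grind

theorem k_very_ample_criterion_r7_general (k : ℤ)
    (a : ℤ) (b : Fin 7 → ℤ) :
    (∀ ξ : ℤ × (Fin 7 → ℤ), IsExc7 ξ → k ≤ pairing7 (a, b) ξ) ↔
      ((∀ i, k ≤ b i) ∧
       (∀ i j, i ≠ j → b i + b j + k ≤ a) ∧
       (∀ T : Finset (Fin 7), T.card = 5 → (∑ i ∈ T, b i) + k ≤ 2 * a) ∧
       (∀ i : Fin 7,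
         2 * b i + (∑ j ∈ Finset.univ \ {i}, b j) + k ≤ 3 * a)) := by
  simp only [isExc7_iff, or_imp, forall_and, forall_exists_index, and_imp, forall_apply_eq_imp_iff,
    forall_apply_eq_imp_iff₂]
  simp +contextual only [Finset.forall_card_eq_two_iff, pairing7_indicatorVec,
    pairing7_neg_indicatorVec_singleton, pairing7_one_add_indicatorVec_singleton, sum_pair,
    ne_eq, not_false_eq_true, one_mul, le_sub_iff_add_le']

/-- for `k ≥ 0`, a class `L = (a, b)` on `S₇` satisfies
`⟨L, ξ⟩ ≥ k` for every exceptional class `ξ ∈ E₇` iff `bᵢ ≥ k` for all `i`,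
`a ≥ bᵢ + bⱼ + k` for all `i ≠ j`, `2a ≥ ∑_{i ∈ T} bᵢ + k` for every
5-element subset `T` of `Fin 7`, and `3a ≥ 2bᵢ + ∑_{j ≠ i} bⱼ + k` for
every index `i`. -/
theorem k_very_ample_criterion_r7 (k : ℤ) (hk : 0 ≤ k)
    (a : ℤ) (b : Fin 7 → ℤ) :
    (∀ ξ : ℤ × (Fin 7 → ℤ), IsExc7 ξ → k ≤ pairing7 (a, b) ξ) ↔
      ((∀ i, k ≤ b i) ∧
       (∀ i j, i ≠ j → b i + b j + k ≤ a) ∧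
       (∀ T : Finset (Fin 7), T.card = 5 → (∑ i ∈ T, b i) + k ≤ 2 * a) ∧
       (∀ i : Fin 7,
         2 * b i + (∑ j ∈ Finset.univ \ {i}, b j) + k ≤ 3 * a)) :=
  k_very_ample_criterion_r7_general k a b
end

section
/- Let k ≥ 0 be an integer and let L = (a, b) ∈ ℤ × (Fin 8 → ℤ). Then ⟨L, ξ⟩ ≥ k for every exceptional class ξ ∈ E_8 if and only if all of the following hold: b_i ≥ k for all i; a ≥ b_i + b_j + k for all distinct i ≠ j; 2a ≥ ∑_{i∈T} b_i + k for every 5-element subset T; 3a ≥ 2b_i + ∑_{j∈T} b_j + k for every index i and every 6-element subset T of Fin 8 \ {i}; 4a ≥ 2∑_{i∈A} b_i + ∑_{j∈B} b_j + k for every partition of Fin 8 into a 3-element subset A and the complementary 5-element subset B; 5a ≥ 2∑_{i∈C} b_i + b_j + b_{j'} + k for every 6-element subset C with complementary indices j, j'; and 6a ≥ 3b_i + 2∑_{j ≠ i} b_j + k for every index i. -/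
/-- The intersection pairing on `Λ₈ = ℤ × (Fin 8 → ℤ)`:
`⟨(a,b),(d,m)⟩ = a·d - ∑ bᵢ·mᵢ`. -/
def pairing8 (L ξ : ℤ × (Fin 8 → ℤ)) : ℤ :=
  L.1 * ξ.1 - ∑ i, L.2 i * ξ.2 i

/-!
An exceptional class `(d, m)` satisfies `∑ mᵢ = 3d - 1` and `∑ mᵢ² = d² + 1`, hence
`∑ (mᵢ - p)(mᵢ - q) = d² + 1 - (p + q)(3d - 1) + 8pq` for all `p, q`. For `q = p + 1` every
summand is a nonnegative product of consecutive integers. Together with Cauchy–Schwarz this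
forces `0 ≤ d ≤ 6`, and for `d ≠ 3` a suitable `p` makes the right side vanish, so `m` takes
only the values `p, p + 1`, with multiplicities fixed by `∑ mᵢ = 3d - 1`. For `d = 3`,
`∑ (mᵢ - 1)² = 2` leaves `m` with one entry `2`, six entries `1` and one `0`. Thus the
exceptional classes of degree `d` form a single orbit under permuting the eight points, and
`⟨L, ξ⟩ ≥ k` on that orbit is exactly the `d`-th inequality of the criterion.
-/

open Finset

lemma sub_mul_sub_add_one_nonneg (x p : ℤ) : 0 ≤ (x - p) * (x - (p + 1)) := by
  rcases le_or_gt x p with h | h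
  · exact mul_nonneg_of_nonpos_of_nonpos (by omega) (by omega)
  · exact mul_nonneg (by omega) (by omega)

lemma eq_or_eq_add_one_of_sum_sub_mul_sub_eq_zero {ι : Type*} [Fintype ι]
    {m : ι → ℤ} {p : ℤ}
    (h : ∑ i, (m i - p) * (m i - (p + 1)) = 0) (i : ι) : m i = p ∨ m i = p + 1 := by
  have := (sum_eq_zero_iff_of_nonneg fun j _ ↦ sub_mul_sub_add_one_nonneg (m j) p).1 h i
    (mem_univ i)
  rcases mul_eq_zero.1 this with h | h <;> omega

lemma sum_eq_sum_fiberwise {ι κ M : Type*} [Fintype ι] [DecidableEq κ] [AddCommMonoid M]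
    {m : ι → κ} {V : Finset κ} (hm : ∀ i, m i ∈ V) (g : ι → κ → M) :
    ∑ i, g i (m i) = ∑ v ∈ V, ∑ i with m i = v, g i v := by
  rw [← sum_fiberwise_of_maps_to fun i _ ↦ hm i]
  exact sum_congr rfl fun v _ ↦ sum_congr rfl fun i hi ↦ by rw [(mem_filter.1 hi).2]

section TwoValued

variable {ι α : Type*} [Fintype ι] [DecidableEq ι]

def twoValued (T : Finset ι) (v u : α) : ι → α := fun i ↦ if i ∈ T then v else u

lemma exists_eq_twoValued [DecidableEq α] {m : ι → α} {v u : α}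
    (h : ∀ i, m i = v ∨ m i = u) :
    ∃ T : Finset ι, m = twoValued T v u := by
  refine ⟨({i | m i = v} : Finset ι), funext fun i ↦ ?_⟩
  rcases h i with h | h <;> simp [twoValued, h]

lemma sum_twoValued {M : Type*} [AddCommMonoid M] (T : Finset ι) (v u : α) (f : ι → α → M) :
    ∑ i, f i (twoValued T v u i) = ∑ i ∈ T, f i v + ∑ i ∈ Tᶜ, f i u := by
  rw [← sum_add_sum_compl T]
  congr 1 <;> refine sum_congr rfl fun i hi ↦ ?_
  · simp [twoValued, hi]
  · simp [twoValued, mem_compl.1 hi]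

end TwoValued

lemma isExc8_twoValued_iff {d v u : ℤ} {T : Finset (Fin 8)} :
    IsExc8 (d, twoValued T v u) ↔
      d ^ 2 - (v ^ 2 * #T + u ^ 2 * (8 - #T)) = -1 ∧ 3 * d - (v * #T + u * (8 - #T)) = 1 := by
  have hc : ((#Tᶜ : ℕ) : ℤ) = 8 - #T := by
    have := card_le_univ T
    rw [card_compl, Fintype.card_fin] at *
    omega
  simp only [IsExc8]
  rw [sum_twoValued T v u fun _ x ↦ x ^ 2, sum_twoValued T v u fun _ x ↦ x]
  simp only [sum_const, nsmul_eq_mul, hc]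
  ring_nf

lemma pairing8_twoValued (a d v u : ℤ) (b : Fin 8 → ℤ) (T : Finset (Fin 8)) :
    pairing8 (a, b) (d, twoValued T v u) =
      a * d - (v * ∑ i ∈ T, b i + u * ∑ i ∈ Tᶜ, b i) := by
  simp only [pairing8]
  rw [sum_twoValued T v u fun i x ↦ b i * x, ← sum_mul, ← sum_mul]
  ring

namespace IsExc8

variable {d : ℤ} {m : Fin 8 → ℤ}

lemma sum_eq (h : IsExc8 (d, m)) : ∑ i, m i = 3 * d - 1 := by
  linarith [h.2]

lemma sum_sq_eq (h : IsExc8 (d, m)) : ∑ i, m i ^ 2 = d ^ 2 + 1 := by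
  linarith [h.1]

lemma sum_sub_mul_sub (h : IsExc8 (d, m)) (p q : ℤ) :
    ∑ i, (m i - p) * (m i - q) = d ^ 2 + 1 - (p + q) * (3 * d - 1) + 8 * p * q := by
  have : ∀ i, (m i - p) * (m i - q) = m i ^ 2 - (p + q) * m i + p * q := fun i ↦ by ring
  simp only [this, sum_add_distrib, sum_sub_distrib, ← mul_sum, sum_const, card_univ,
    Fintype.card_fin, nsmul_eq_mul, h.sum_eq, h.sum_sq_eq]
  push_cast
  ring

/-- Cauchy–Schwarz gives `-1 ≤ d ≤ 7`; the endpoints make `∑ (mᵢ + 1) mᵢ` resp.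
`∑ (mᵢ - 2)(mᵢ - 3)` negative. -/
lemma degree_bounds (h : IsExc8 (d, m)) : 0 ≤ d ∧ d ≤ 6 := by
  have hcs := sq_sum_le_card_mul_sum_sq (s := univ) (f := m)
  have hlo := (h.sum_sub_mul_sub (-1) 0).symm.trans_ge
    (sum_nonneg fun i _ ↦ by simpa using sub_mul_sub_add_one_nonneg (m i) (-1))
  have hhi := (h.sum_sub_mul_sub 2 3).symm.trans_ge
    (sum_nonneg fun i _ ↦ by simpa using sub_mul_sub_add_one_nonneg (m i) 2)
  simp only [card_univ, Fintype.card_fin, h.sum_eq, h.sum_sq_eq] at hcs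
  push_cast at hcs
  constructor <;> nlinarith

lemma eq_or_eq_add_one (h : IsExc8 (d, m)) (p : ℤ)
    (hp : d ^ 2 + 1 - (2 * p + 1) * (3 * d - 1) + 8 * p * (p + 1) = 0) (i : Fin 8) :
    m i = p ∨ m i = p + 1 :=
  eq_or_eq_add_one_of_sum_sub_mul_sub_eq_zero
    ((h.sum_sub_mul_sub p (p + 1)).trans (by linear_combination hp)) i

end IsExc8

section Degrees

variable {k a : ℤ} {b : Fin 8 → ℤ}

lemma forall_isExc8_iff_of_twoValued {d v u : ℤ} {c : ℕ}
    (hval : ∀ m, IsExc8 (d, m) → ∀ i, m i = v ∨ m i = u)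
    (hexc : ∀ T : Finset (Fin 8), IsExc8 (d, twoValued T v u) ↔ #T = c) :
    (∀ m, IsExc8 (d, m) → k ≤ pairing8 (a, b) (d, m)) ↔
      ∀ T : Finset (Fin 8), #T = c →
        k ≤ a * d - (v * ∑ i ∈ T, b i + u * ∑ i ∈ Tᶜ, b i) := by
  refine ⟨fun H T hT ↦ ?_, fun H m hm ↦ ?_⟩
  · simpa only [pairing8_twoValued] using H _ ((hexc T).2 hT)
  · obtain ⟨T, rfl⟩ := exists_eq_twoValued (hval m hm)
    rw [pairing8_twoValued]
    exact H T ((hexc T).1 hm)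

lemma forall_isExc8_zero_iff :
    (∀ m, IsExc8 (0, m) → k ≤ pairing8 (a, b) (0, m)) ↔ ∀ i, k ≤ b i := by
  rw [forall_isExc8_iff_of_twoValued (v := -1) (u := 0) (c := 1)
    (fun m hm ↦ hm.eq_or_eq_add_one (-1) (by norm_num))
    (fun T ↦ by rw [isExc8_twoValued_iff]; omega)]
  simp [card_eq_one]

lemma forall_isExc8_one_iff :
    (∀ m, IsExc8 (1, m) → k ≤ pairing8 (a, b) (1, m)) ↔
      ∀ i j, i ≠ j → b i + b j + k ≤ a := by
  rw [forall_isExc8_iff_of_twoValued (v := 1) (u := 0) (c := 2)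
    (fun m hm i ↦ (hm.eq_or_eq_add_one 0 (by norm_num) i).symm)
    (fun T ↦ by rw [isExc8_twoValued_iff]; omega)]
  simp only [card_eq_two, forall_exists_index, and_imp, mul_one]
  constructor
  · intro H i j hij
    have := H _ i j hij rfl
    rw [sum_pair hij] at this
    omega
  · rintro H _ i j hij rfl
    rw [sum_pair hij]
    have := H i j hij
    omega

lemma forall_isExc8_two_iff :
    (∀ m, IsExc8 (2, m) → k ≤ pairing8 (a, b) (2, m)) ↔
      ∀ T : Finset (Fin 8), #T = 5 → ∑ i ∈ T, b i + k ≤ 2 * a := by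
  rw [forall_isExc8_iff_of_twoValued (v := 1) (u := 0) (c := 5)
    (fun m hm i ↦ (hm.eq_or_eq_add_one 0 (by norm_num) i).symm)
    (fun T ↦ by rw [isExc8_twoValued_iff]; omega)]
  exact forall₂_congr fun _ _ ↦ by omega

lemma forall_isExc8_three_iff :
    (∀ m, IsExc8 (3, m) → k ≤ pairing8 (a, b) (3, m)) ↔
      ∀ i T, #T = 6 → i ∉ T → 2 * b i + ∑ j ∈ T, b j + k ≤ 3 * a := by
  refine ⟨fun H i T hT hi ↦ ?_, fun H m hm ↦ ?_⟩
  · set m : Fin 8 → ℤ := fun l ↦ if l ∈ T then 1 else if l = i then 2 else 0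
    have hm : IsExc8 (3, m) := by simp [IsExc8, m, apply_ite (· ^ 2), sum_ite, hT, hi]
    have hpair : pairing8 (a, b) (3, m) = 3 * a - (2 * b i + ∑ j ∈ T, b j) := by
      simp [pairing8, m, mul_ite, sum_ite, hi, mul_comm, add_comm]
    linarith [H m hm]
  · have hval : ∀ l, m l ∈ ({0, 1, 2} : Finset ℤ) := fun l ↦ by
      have := single_le_sum (fun j _ ↦ mul_self_nonneg (m j - 1)) (mem_univ l)
      rw [hm.sum_sub_mul_sub 1 1] at this
      simp only [mem_insert, mem_singleton]
      have : m l ≤ 2 := by nlinarith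
      have : 0 ≤ m l := by nlinarith
      omega
    have h₁ : ∑ l, m l = #{l | m l = 1} + 2 * #{l | m l = 2} := by
      rw [sum_eq_sum_fiberwise hval fun _ x ↦ x]
      simp [mul_comm]
    have h₂ : ∑ l, m l ^ 2 = #{l | m l = 1} + 4 * #{l | m l = 2} := by
      rw [sum_eq_sum_fiberwise hval fun _ x ↦ x ^ 2]
      simp [mul_comm]
    have hb : ∑ l, b l * m l = ∑ l with m l = 1, b l + 2 * ∑ l with m l = 2, b l := by
      rw [sum_eq_sum_fiberwise hval fun l x ↦ b l * x]
      simp [mul_sum, mul_comm]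
    have hcard₁ : #{l | m l = 1} = 6 := by linarith [hm.sum_eq, hm.sum_sq_eq]
    have hcard₂ : #{l | m l = 2} = 1 := by linarith [hm.sum_eq, hm.sum_sq_eq]
    obtain ⟨i, hi⟩ := card_eq_one.1 hcard₂
    have hiT : i ∉ ({l | m l = 1} : Finset (Fin 8)) := by
      have hmi : i ∈ ({l | m l = 2} : Finset (Fin 8)) := hi ▸ mem_singleton_self i
      simp only [mem_filter, mem_univ, true_and] at hmi ⊢
      omega
    have := H i _ hcard₁ hiT
    simp only [pairing8, hb, hi, sum_singleton]
    linarith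

lemma forall_isExc8_four_iff :
    (∀ m, IsExc8 (4, m) → k ≤ pairing8 (a, b) (4, m)) ↔
      ∀ A : Finset (Fin 8), #A = 3 →
        2 * ∑ i ∈ A, b i + ∑ j ∈ Aᶜ, b j + k ≤ 4 * a := by
  rw [forall_isExc8_iff_of_twoValued (v := 2) (u := 1) (c := 3)
    (fun m hm i ↦ (hm.eq_or_eq_add_one 1 (by norm_num) i).symm)
    (fun T ↦ by rw [isExc8_twoValued_iff]; omega)]
  exact forall₂_congr fun _ _ ↦ by omega

lemma forall_isExc8_five_iff :
    (∀ m, IsExc8 (5, m) → k ≤ pairing8 (a, b) (5, m)) ↔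
      ∀ C : Finset (Fin 8), #C = 6 →
        2 * ∑ i ∈ C, b i + ∑ j ∈ Cᶜ, b j + k ≤ 5 * a := by
  rw [forall_isExc8_iff_of_twoValued (v := 2) (u := 1) (c := 6)
    (fun m hm i ↦ (hm.eq_or_eq_add_one 1 (by norm_num) i).symm)
    (fun T ↦ by rw [isExc8_twoValued_iff]; omega)]
  exact forall₂_congr fun _ _ ↦ by omega

lemma forall_isExc8_six_iff :
    (∀ m, IsExc8 (6, m) → k ≤ pairing8 (a, b) (6, m)) ↔
      ∀ i, 3 * b i + 2 * ∑ j ∈ univ \ {i}, b j + k ≤ 6 * a := by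
  rw [forall_isExc8_iff_of_twoValued (v := 3) (u := 2) (c := 1)
    (fun m hm i ↦ (hm.eq_or_eq_add_one 2 (by norm_num) i).symm)
    (fun T ↦ by rw [isExc8_twoValued_iff]; omega)]
  simp only [card_eq_one, forall_exists_index, compl_eq_univ_sdiff]
  rw [forall_comm]
  simp only [forall_eq, sum_singleton]
  exact forall_congr' fun _ ↦ by omega

end Degrees

lemma forall_isExc8_iff_forall_degree (P : ℤ × (Fin 8 → ℤ) → Prop) :
    (∀ ξ, IsExc8 ξ → P ξ) ↔
      (∀ m, IsExc8 (0, m) → P (0, m)) ∧ (∀ m, IsExc8 (1, m) → P (1, m)) ∧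
      (∀ m, IsExc8 (2, m) → P (2, m)) ∧ (∀ m, IsExc8 (3, m) → P (3, m)) ∧
      (∀ m, IsExc8 (4, m) → P (4, m)) ∧ (∀ m, IsExc8 (5, m) → P (5, m)) ∧
      (∀ m, IsExc8 (6, m) → P (6, m)) := by
  refine ⟨fun H ↦ ⟨fun _ ↦ H _, fun _ ↦ H _, fun _ ↦ H _, fun _ ↦ H _, fun _ ↦ H _,
    fun _ ↦ H _, fun _ ↦ H _⟩, ?_⟩
  rintro ⟨h₀, h₁, h₂, h₃, h₄, h₅, h₆⟩ ⟨d, m⟩ hm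
  obtain ⟨hlo, hhi⟩ := hm.degree_bounds
  interval_cases d
  exacts [h₀ m hm, h₁ m hm, h₂ m hm, h₃ m hm, h₄ m hm, h₅ m hm, h₆ m hm]

theorem k_very_ample_criterion_r8_general (k : ℤ)
    (a : ℤ) (b : Fin 8 → ℤ) :
    (∀ ξ : ℤ × (Fin 8 → ℤ), IsExc8 ξ → k ≤ pairing8 (a, b) ξ) ↔
      ((∀ i, k ≤ b i) ∧
       (∀ i j, i ≠ j → b i + b j + k ≤ a) ∧
       (∀ T : Finset (Fin 8), T.card = 5 → (∑ i ∈ T, b i) + k ≤ 2 * a) ∧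
       (∀ i : Fin 8, ∀ T : Finset (Fin 8), T.card = 6 → i ∉ T →
         2 * b i + (∑ j ∈ T, b j) + k ≤ 3 * a) ∧
       (∀ A : Finset (Fin 8), A.card = 3 →
         2 * (∑ i ∈ A, b i) + (∑ j ∈ Aᶜ, b j) + k ≤ 4 * a) ∧
       (∀ C : Finset (Fin 8), C.card = 6 →
         2 * (∑ i ∈ C, b i) + (∑ j ∈ Cᶜ, b j) + k ≤ 5 * a) ∧
       (∀ i : Fin 8,
         3 * b i + 2 * (∑ j ∈ Finset.univ \ {i}, b j) + k ≤ 6 * a)) := by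
  rw [forall_isExc8_iff_forall_degree, forall_isExc8_zero_iff, forall_isExc8_one_iff,
    forall_isExc8_two_iff, forall_isExc8_three_iff, forall_isExc8_four_iff,
    forall_isExc8_five_iff, forall_isExc8_six_iff]

/-- for `k ≥ 0`, a class `L = (a, b)` on `S₈` satisfies
`⟨L, ξ⟩ ≥ k` for every exceptional class `ξ ∈ E₈` iff all of the listed
numerical conditions hold. -/
theorem k_very_ample_criterion_r8 (k : ℤ) (hk : 0 ≤ k)
    (a : ℤ) (b : Fin 8 → ℤ) :
    (∀ ξ : ℤ × (Fin 8 → ℤ), IsExc8 ξ → k ≤ pairing8 (a, b) ξ) ↔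
      ((∀ i, k ≤ b i) ∧
       (∀ i j, i ≠ j → b i + b j + k ≤ a) ∧
       (∀ T : Finset (Fin 8), T.card = 5 → (∑ i ∈ T, b i) + k ≤ 2 * a) ∧
       (∀ i : Fin 8, ∀ T : Finset (Fin 8), T.card = 6 → i ∉ T →
         2 * b i + (∑ j ∈ T, b j) + k ≤ 3 * a) ∧
       (∀ A : Finset (Fin 8), A.card = 3 →
         2 * (∑ i ∈ A, b i) + (∑ j ∈ Aᶜ, b j) + k ≤ 4 * a) ∧
       (∀ C : Finset (Fin 8), C.card = 6 →
         2 * (∑ i ∈ C, b i) + (∑ j ∈ Cᶜ, b j) + k ≤ 5 * a) ∧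
       (∀ i : Fin 8,
         3 * b i + 2 * (∑ j ∈ Finset.univ \ {i}, b j) + k ≤ 6 * a)) :=
  k_very_ample_criterion_r8_general k a b
end
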